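/- arXiv:1708.07642 — 2 statements merged into one kernel-verified Lean document; each statement's English description precedes it below -/
import Mathlib

section
/- Let ξ be a real random variable such that for some τ_1 ≥ 0 and τ_2 ≥ 0 and for all t ≥ 1, with probability at least 1 − e^{−t}, |ξ| ≤ τ_1√t ∨ τ_2 t. Let ℓ satisfy Assumption 3.1 with constants c_1, c_2. If 2c_2τ_2 < 1, then 𝔼ℓ²(ξ) ≤ 2e√(2π) c_1² e^{2c_2²τ_1²} + e c_1²/(1 − 2c_2τ_2). -/
open MeasureTheory ProbabilityTheory Filter Set
open scoped RealInnerProductSpace Topology NNReal ENNReal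

noncomputable section

namespace KLN

variable {H : Type*} [NormedAddCommGroup H] [InnerProductSpace ℝ H] [CompleteSpace H]

/-- Rank-one operator `x ⊗ y : w ↦ ⟪y, w⟫ • x`. -/
def outer (x y : H) : H →L[ℝ] H := (innerSL ℝ y).smulRight x

/-- Sample covariance of the sample `X`. -/
def sampleCov {n : ℕ} (X : Fin n → H) : H →L[ℝ] H :=
  (n : ℝ)⁻¹ • ∑ j : Fin n, outer (X j) (X j)

/-- Courant–Fischer: `lam A j` is the `(j+1)`-th largest eigenvalue of the
positive self-adjoint compact operator `A` (eigenvalues repeated with multiplicity). -/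
def lam (A : H →L[ℝ] H) (j : ℕ) : ℝ :=
  ⨆ V : {V : Submodule ℝ H // Module.finrank ℝ V = j + 1},
    ⨅ x : {x : H // x ∈ V.1 ∧ ‖x‖ = 1}, ⟪A x.1, x.1⟫

/-- `λ_δ(A) := max {λ ∈ A : (λ-δ, λ) ∩ A = ∅}`. -/
def lamDelta (δ : ℝ) (A : Set ℝ) : ℝ := sSup {l | l ∈ A ∧ Ioo (l - δ) l ∩ A = ∅}

/-- Top δ-cluster `T_δ(A) := A \ [0, λ_δ(A))`. -/
def topCluster (δ : ℝ) (A : Set ℝ) : Set ℝ := A \ Ico 0 (lamDelta δ A)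

/-- Successive residual sets after removing top clusters. -/
def resid (δ : ℝ) (A : Set ℝ) : ℕ → Set ℝ
  | 0 => A
  | k + 1 => resid δ A k \ topCluster δ (resid δ A k)

/-- `cluster δ A k` is the `(k+1)`-th δ-cluster `A_{k+1}` of `A`. -/
def cluster (δ : ℝ) (A : Set ℝ) (k : ℕ) : Set ℝ := topCluster δ (resid δ A k)

/-- The number of δ-clusters: `ν := min {j : A_{j+1} = ∅}`. -/
def nClusters (δ : ℝ) (A : Set ℝ) : ℕ := sInf {j | cluster δ A j = ∅}

/-- `σ(A) ∪ {0}`. -/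
def spec0 (A : H →L[ℝ] H) : Set ℝ := spectrum ℝ A ∪ {0}

/-- Direct sum of the eigenspaces of `A` for eigenvalues in `c`. -/
def clusterSpace (A : H →L[ℝ] H) (c : Set ℝ) : Submodule ℝ H :=
  ⨆ t ∈ c, Module.End.eigenspace (A : H →ₗ[ℝ] H) t

/-- `A` is self-adjoint, positive and nuclear (trace class). -/
def IsPosNuclear (A : H →L[ℝ] H) : Prop :=
  (∀ x y : H, ⟪A x, y⟫ = ⟪x, A y⟫) ∧ (∀ x : H, 0 ≤ ⟪A x, x⟫) ∧
    ∃ (ι : Type) (e : HilbertBasis ι ℝ H), Summable fun i => ⟪A (e i), e i⟫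

/-- Nuclear norm of a self-adjoint `A`: `‖A‖₁ = ∑_j √(λ_j(A∘A))`. -/
def nuclearNormSA (A : H →L[ℝ] H) : ℝ := ∑' j, Real.sqrt (lam (A.comp A) j)

/-- A covariance operator together with its spectral decomposition
`Σ = ∑_s μ_s P_s` where `μ 0 > μ 1 > ⋯ > 0` are the distinct eigenvalues (0-indexed;
zero projections `P s = 0` are allowed so that finite rank operators are covered)
and `P s` are the (finite rank, mutually orthogonal) spectral projections. -/
structure CovOp (H : Type*) [NormedAddCommGroup H] [InnerProductSpace ℝ H]
    [CompleteSpace H] where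
  toCLM : H →L[ℝ] H
  μ : ℕ → ℝ
  P : ℕ → H →L[ℝ] H
  μ_pos : ∀ s, 0 < μ s
  μ_anti : StrictAnti μ
  μ_lim : Tendsto μ atTop (nhds 0)
  P_symm : ∀ s (x y : H), ⟪P s x, y⟫ = ⟪x, P s y⟫
  P_idem : ∀ s (x : H), P s (P s x) = P s x
  P_orth : ∀ s t, s ≠ t → ∀ x : H, P s (P t x) = 0
  P_finrank : ∀ s, FiniteDimensional ℝ (LinearMap.range (P s).toLinearMap)
  μm_summable : Summable fun s =>
    μ s * (Module.finrank ℝ (LinearMap.range (P s).toLinearMap) : ℝ)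
  decomp : ∀ x : H, HasSum (fun s => μ s • P s x) (toCLM x)

namespace CovOp

/-- multiplicity `m_s` of `μ s`. -/
def m (S : CovOp H) (s : ℕ) : ℕ :=
  Module.finrank ℝ (LinearMap.range (S.P s).toLinearMap)

/-- `tr(Σ) = ∑_s μ_s m_s`. -/
def trace (S : CovOp H) : ℝ := ∑' s, S.μ s * (S.m s : ℝ)

/-- effective rank `r(Σ) = tr(Σ)/‖Σ‖`. -/
def effRank (S : CovOp H) : ℝ := S.trace / ‖S.toCLM‖

/-- spectral gap `g_r = dist(μ_r, σ(Σ) \ {μ_r})`. -/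
def g (S : CovOp H) (r : ℕ) : ℝ :=
  Metric.infDist (S.μ r) (spectrum ℝ S.toCLM \ {S.μ r})

/-- `ḡ_r = min_{s ≤ r} g_s`. -/
def gbar (S : CovOp H) (r : ℕ) : ℝ := ⨅ s : Fin (r + 1), S.g s

/-- `C_r x = ∑_{s ≠ r} (μ_r - μ_s)⁻¹ P_s x`. -/
def C (S : CovOp H) (r : ℕ) (x : H) : H :=
  ∑' s, (if s = r then 0 else (S.μ r - S.μ s)⁻¹) • S.P s x

/-- `σ_r²(Σ; u) = μ_r ⟨Σ C_r u, C_r u⟩`. -/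
def sigmaSq (S : CovOp H) (r : ℕ) (u : H) : ℝ :=
  S.μ r * ⟪S.toCLM (S.C r u), S.C r u⟫

/-- `Δ_r = {j : λ_j(Σ) = μ_r}` (eigenvalues `λ_j` with multiplicities, 0-indexed). -/
def Delta (S : CovOp H) (r : ℕ) : Set ℕ := {j | lam S.toCLM j = S.μ r}

/-- `μ r` is a simple eigenvalue with (unit) eigenvector `θ`, i.e. `P r = θ ⊗ θ`. -/
def SimpleVec (S : CovOp H) (r : ℕ) (θ : H) : Prop :=
  ‖θ‖ = 1 ∧ ∀ x : H, S.P r x = ⟪θ, x⟫ • θ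

/-- `L_r(E) x = P_r E C_r x + C_r E P_r x`, with `P_r = θ ⊗ θ`. -/
def L (S : CovOp H) (r : ℕ) (θ : H) (E : H →L[ℝ] H) (x : H) : H :=
  ⟪θ, E (S.C r x)⟫ • θ + S.C r (E (⟪θ, x⟫ • θ))

/-- the class `𝒮^{(r)}(rk, a, s0, u)`. -/
def memS (S : CovOp H) (r : ℕ) (u : H) (rk a s0 : ℝ) : Prop :=
  S.effRank ≤ rk ∧ ‖S.toCLM‖ / S.gbar r ≤ a ∧ s0 ^ 2 ≤ S.sigmaSq r u

/-- the open class `𝒮̊^{(r)}(rk, a, s0, u)`. -/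
def memSo (S : CovOp H) (r : ℕ) (u : H) (rk a s0 : ℝ) : Prop :=
  S.effRank < rk ∧ ‖S.toCLM‖ / S.gbar r < a ∧ s0 ^ 2 < S.sigmaSq r u

/-- `A_r(Σ) = 2 ∑_{s ≠ r} μ_r μ_s m_s / (μ_r - μ_s)²`. -/
def Ar (S : CovOp H) (r : ℕ) : ℝ :=
  2 * ∑' s, (if s = r then 0 else S.μ r * S.μ s * (S.m s : ℝ) / (S.μ r - S.μ s) ^ 2)

end CovOp

/-- `ν` is a centered Gaussian measure on `H` with covariance operator `A`. -/
def IsGaussian [MeasurableSpace H] (ν : Measure H) (A : H →L[ℝ] H) : Prop :=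
  IsProbabilityMeasure ν ∧
    ∀ u : H, ν.map (fun x => ⟪x, u⟫) = gaussianReal 0 (Real.toNNReal ⟪A u, u⟫)

/-- standard normal distribution function. -/
def Phi (x : ℝ) : ℝ := ((gaussianReal 0 1) (Iic x)).toReal

/-- `E ℓ(Z)`, `Z` standard normal. -/
def stdGaussExp (f : ℝ → ℝ) : ℝ := ∫ z, f z ∂(gaussianReal 0 1)

/-- Assumption 3.1 on the loss function. -/
structure IsLoss (f : ℝ → ℝ) (c₁ c₂ : ℝ) : Prop where
  c₁_pos : 0 < c₁
  c₂_pos : 0 < c₂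
  nonneg : ∀ x, 0 ≤ f x
  zero : f 0 = 0
  even : ∀ x, f (-x) = f x
  mono : MonotoneOn f (Ici 0)
  conv : ConvexOn ℝ (Ici 0) f
  bound : ∀ x, 0 ≤ x → f x ≤ c₁ * Real.exp (c₂ * x)

/-- the bias parameter `b_r = E⟨θ̂_r, θ_r⟩² - 1` for an estimator `est` based on a
sample of `k` i.i.d. observations from `ν`. -/
def biasParam [MeasurableSpace H] {k : ℕ} (ν : Measure H) (θ : H)
    (est : (Fin k → H) → H) : ℝ :=
  (∫ x, ⟪est x, θ⟫ ^ 2 ∂(Measure.pi fun _ : Fin k => ν)) - 1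

/-- `est` is a valid selection of the estimator `θ̂_r^δ` with `δ = τ‖Σ̂‖`: a unit vector,
aligned with `θ`, lying in the direct sum of eigenspaces of `Σ̂` for eigenvalues in the
`r`-th `δ`-cluster of `σ(Σ̂)` (whenever that space is nontrivial). -/
def clusterSel (r : ℕ) (θ : H) (τ : ℝ) {k : ℕ} (est : (Fin k → H) → H) : Prop :=
  ∀ x : Fin k → H,
    ‖est x‖ = 1 ∧ 0 ≤ ⟪est x, θ⟫ ∧
      (clusterSpace (sampleCov x) (cluster (τ * ‖sampleCov x‖) (spec0 (sampleCov x)) r) ≠ ⊥ →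
        est x ∈ clusterSpace (sampleCov x) (cluster (τ * ‖sampleCov x‖) (spec0 (sampleCov x)) r))

/-- `est` is a valid selection of the empirical eigenvector `θ̂_r`: a unit vector, aligned
with `θ`, which is an eigenvector of `Σ̂` for an eigenvalue `λ_j(Σ̂)` with `j ∈ Δ_r`
(whenever such an eigenvector exists). -/
def eigSel (S : CovOp H) (r : ℕ) (θ : H) {k : ℕ} (est : (Fin k → H) → H) : Prop :=
  ∀ x : Fin k → H,
    ‖est x‖ = 1 ∧ 0 ≤ ⟪est x, θ⟫ ∧
      ((∃ v : H, ‖v‖ = 1 ∧ ∃ j ∈ S.Delta r, sampleCov x v = lam (sampleCov x) j • v) →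
        ∃ j ∈ S.Delta r, sampleCov x (est x) = lam (sampleCov x) j • est x)

/-!
Since `ℓ² ≤ c₁² e^{2c₂|ξ|}`, it suffices to bound the exponential moment `E e^{c|ξ|}`.
For `τ₁, τ₂ > 0` the variable `η = min ((|ξ|/τ₁)², |ξ|/τ₂)` is the generalized inverse of
`t ↦ max (τ₁√t) (τ₂t)` at `|ξ|`, so `P(η > t) ≤ e^{-t}` for `t ≥ 1`, and the layer-cake formula
gives `E e^{aη} ≤ e/(1-a)` for `0 ≤ a < 1`. Then `e^{c|ξ|} ≤ e^{cτ₁√η} + e^{cτ₂η}` together with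
`cτ₁√η ≤ (cτ₁)²/2 + η/2` yields `E e^{c|ξ|} ≤ 2e e^{(cτ₁)²/2} + e/(1 - cτ₂)`. The hypothesis
survives enlarging `τ₁, τ₂`, so the degenerate cases `τᵢ = 0` follow by letting the
enlargement tend to `0`.
-/

open Real

lemma measure_lt_le_ofReal_of_one_sub_le {Ω : Type*} [MeasurableSpace Ω] {μ : Measure Ω}
    [IsProbabilityMeasure μ] {X : Ω → ℝ} (hX : Measurable X) {r p : ℝ}
    (h : 1 - p ≤ (μ {ω | X ω ≤ r}).toReal) :
    μ {ω | r < X ω} ≤ ENNReal.ofReal p := by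
  have hcompl : {ω | r < X ω} = {ω | X ω ≤ r}ᶜ := by ext; simp
  have hle : (μ {ω | r < X ω}).toReal ≤ p := by
    rw [hcompl, prob_compl_eq_one_sub (measurableSet_le hX measurable_const),
      ENNReal.toReal_sub_of_le prob_le_one ENNReal.one_ne_top, ENNReal.toReal_one]
    linarith
  exact (ENNReal.le_ofReal_iff_toReal_le (measure_ne_top _ _)
    (ENNReal.toReal_nonneg.trans hle)).2 hle

lemma le_max_mul_sqrt_mul_iff {τ₁ τ₂ v t : ℝ} (hτ₁ : 0 < τ₁) (hτ₂ : 0 < τ₂) (hv : 0 ≤ v)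
    (ht : 0 ≤ t) : v ≤ max (τ₁ * √t) (τ₂ * t) ↔ min ((v / τ₁) ^ 2) (v / τ₂) ≤ t := by
  rw [le_max_iff, min_le_iff, ← div_le_iff₀' hτ₁, ← div_le_iff₀' hτ₂,
    Real.le_sqrt (div_nonneg hv hτ₁.le) ht]

lemma measure_lt_le_ofReal_exp_one_sub {Ω : Type*} [MeasurableSpace Ω] {μ : Measure Ω}
    [IsProbabilityMeasure μ] {η : Ω → ℝ}
    (htail : ∀ t, 1 ≤ t → μ {ω | t < η ω} ≤ ENNReal.ofReal (exp (-t))) (t : ℝ) :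
    μ {ω | t < η ω} ≤ ENNReal.ofReal (exp (1 - t)) := by
  rcases lt_or_ge t 1 with ht | ht
  · refine prob_le_one.trans ?_
    rw [ENNReal.one_le_ofReal]
    exact one_le_exp (by linarith)
  · exact (htail t ht).trans (ENNReal.ofReal_le_ofReal (exp_le_exp.2 (by linarith)))

lemma integral_mul_exp_mul (a x : ℝ) : ∫ t in (0 : ℝ)..x, a * exp (a * t) = exp (a * x) - 1 := by
  rw [intervalIntegral.integral_eq_sub_of_hasDerivAt (f := fun t => exp (a * t))
    (fun t _ => ?_) ((by fun_prop : Continuous fun t => a * exp (a * t)).intervalIntegrable _ _)]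
  · simp
  · simpa [mul_comm] using ((hasDerivAt_id t).const_mul a).exp

lemma lintegral_exp_one_sub_mul_exp_mul {a : ℝ} (ha₀ : 0 ≤ a) (ha₁ : a < 1) :
    ∫⁻ t in Ioi 0, ENNReal.ofReal (exp (1 - t)) * ENNReal.ofReal (a * exp (a * t)) =
      ENNReal.ofReal (a * exp 1 / (1 - a)) := by
  have h1a : 0 < 1 - a := by linarith
  have hexp : ∀ t, exp (1 - t) * (a * exp (a * t)) = a * exp 1 * exp (-(1 - a) * t) := by
    intro t
    rw [mul_left_comm, mul_assoc, ← exp_add, ← exp_add]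
    ring_nf
  simp_rw [← ENNReal.ofReal_mul (exp_pos _).le, hexp]
  rw [← ofReal_integral_eq_lintegral_ofReal
      ((exp_neg_integrableOn_Ioi 0 h1a).const_mul _) (ae_of_all _ fun t => by positivity),
    integral_const_mul, integral_exp_mul_Ioi (by linarith)]
  congr 1
  field_simp
  simp

lemma lintegral_exp_mul_le_of_tail {Ω : Type*} [MeasurableSpace Ω] {μ : Measure Ω}
    [IsProbabilityMeasure μ] {η : Ω → ℝ} (hη : Measurable η) (hη₀ : ∀ ω, 0 ≤ η ω)
    (htail : ∀ t, 1 ≤ t → μ {ω | t < η ω} ≤ ENNReal.ofReal (exp (-t)))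
    {a : ℝ} (ha₀ : 0 ≤ a) (ha₁ : a < 1) :
    ∫⁻ ω, ENNReal.ofReal (exp (a * η ω)) ∂μ ≤ ENNReal.ofReal (exp 1 / (1 - a)) := by
  have hlayer : ∫⁻ ω, ENNReal.ofReal (exp (a * η ω) - 1) ∂μ
      = ∫⁻ t in Ioi 0, μ {ω | t < η ω} * ENNReal.ofReal (a * exp (a * t)) := by
    simp_rw [← integral_mul_exp_mul]
    exact lintegral_comp_eq_lintegral_meas_lt_mul μ (ae_of_all _ hη₀) hη.aemeasurable
      (fun t _ => (by fun_prop : Continuous fun t => a * exp (a * t)).intervalIntegrable _ _)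
      (ae_of_all _ fun t => by positivity)
  have hsplit : ∀ ω, ENNReal.ofReal (exp (a * η ω)) = 1 + ENNReal.ofReal (exp (a * η ω) - 1) := by
    intro ω
    rw [← ENNReal.ofReal_one, ← ENNReal.ofReal_add zero_le_one
      (sub_nonneg.2 (one_le_exp (by nlinarith [hη₀ ω]))), add_sub_cancel]
  have h1a : 0 < 1 - a := by linarith
  calc ∫⁻ ω, ENNReal.ofReal (exp (a * η ω)) ∂μ
      = 1 + ∫⁻ t in Ioi 0, μ {ω | t < η ω} * ENNReal.ofReal (a * exp (a * t)) := by
        simp_rw [hsplit]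
        rw [lintegral_add_left measurable_const, lintegral_const, measure_univ, mul_one, hlayer]
    _ ≤ 1 + ∫⁻ t in Ioi 0, ENNReal.ofReal (exp (1 - t)) * ENNReal.ofReal (a * exp (a * t)) := by
        gcongr with t
        exact measure_lt_le_ofReal_exp_one_sub htail t
    _ = ENNReal.ofReal ((1 - a + a * exp 1) / (1 - a)) := by
        rw [lintegral_exp_one_sub_mul_exp_mul ha₀ ha₁, ← ENNReal.ofReal_one,
          ← ENNReal.ofReal_add zero_le_one (by positivity)]
        congr 1
        field_simp
    _ ≤ ENNReal.ofReal (exp 1 / (1 - a)) := by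
        gcongr
        nlinarith [add_one_le_exp 1]

lemma lintegral_exp_mul_abs_le_of_pos {Ω : Type*} [MeasurableSpace Ω] {μ : Measure Ω}
    [IsProbabilityMeasure μ] {ξ : Ω → ℝ} (hξ : Measurable ξ) {τ₁ τ₂ : ℝ} (hτ₁ : 0 < τ₁)
    (hτ₂ : 0 < τ₂)
    (htail : ∀ t, 1 ≤ t → μ {ω | max (τ₁ * √t) (τ₂ * t) < |ξ ω|} ≤ ENNReal.ofReal (exp (-t)))
    {c : ℝ} (hc : 0 ≤ c) (hcτ : c * τ₂ < 1) :
    ∫⁻ ω, ENNReal.ofReal (exp (c * |ξ ω|)) ∂μ ≤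
      ENNReal.ofReal (2 * exp 1 * exp ((c * τ₁) ^ 2 / 2) + exp 1 / (1 - c * τ₂)) := by
  set η : Ω → ℝ := fun ω => min ((|ξ ω| / τ₁) ^ 2) (|ξ ω| / τ₂)
  have hη₀ : ∀ ω, 0 ≤ η ω := fun ω => by positivity
  have hη : Measurable η := by fun_prop
  have hξη : ∀ ω, |ξ ω| ≤ max (τ₁ * √(η ω)) (τ₂ * η ω) := fun ω =>
    (le_max_mul_sqrt_mul_iff hτ₁ hτ₂ (abs_nonneg _) (hη₀ ω)).2 le_rfl
  have hη_tail : ∀ t, 1 ≤ t → μ {ω | t < η ω} ≤ ENNReal.ofReal (exp (-t)) := by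
    refine fun t ht => (measure_mono fun ω hω => ?_).trans (htail t ht)
    simp only [mem_ofPred_eq] at hω ⊢
    contrapose! hω
    exact (le_max_mul_sqrt_mul_iff hτ₁ hτ₂ (abs_nonneg _) (by linarith)).1 hω
  have hpt : ∀ ω, exp (c * |ξ ω|) ≤
      exp ((c * τ₁) ^ 2 / 2) * exp (1 / 2 * η ω) + exp (c * τ₂ * η ω) := by
    intro ω
    rw [← exp_add]
    rcases le_max_iff.1 (hξη ω) with h | h
    · have hsq := sq_sqrt (hη₀ ω)
      refine le_add_of_le_of_nonneg (exp_le_exp.2 ?_) (exp_pos _).le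
      nlinarith [sq_nonneg (c * τ₁ - √(η ω)), mul_le_mul_of_nonneg_left h hc]
    · refine le_add_of_nonneg_of_le (exp_pos _).le (exp_le_exp.2 ?_)
      nlinarith [mul_le_mul_of_nonneg_left h hc]
  calc ∫⁻ ω, ENNReal.ofReal (exp (c * |ξ ω|)) ∂μ
      ≤ ∫⁻ ω, (ENNReal.ofReal (exp ((c * τ₁) ^ 2 / 2)) * ENNReal.ofReal (exp (1 / 2 * η ω))
          + ENNReal.ofReal (exp (c * τ₂ * η ω))) ∂μ := by
        refine lintegral_mono fun ω => ?_
        rw [← ENNReal.ofReal_mul (exp_pos _).le, ← ENNReal.ofReal_add (by positivity)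
          (exp_pos _).le]
        exact ENNReal.ofReal_le_ofReal (hpt ω)
    _ = ENNReal.ofReal (exp ((c * τ₁) ^ 2 / 2)) * ∫⁻ ω, ENNReal.ofReal (exp (1 / 2 * η ω)) ∂μ
          + ∫⁻ ω, ENNReal.ofReal (exp (c * τ₂ * η ω)) ∂μ := by
        rw [lintegral_add_left (by fun_prop), lintegral_const_mul _ (by fun_prop)]
    _ ≤ ENNReal.ofReal (exp ((c * τ₁) ^ 2 / 2)) * ENNReal.ofReal (exp 1 / (1 - 1 / 2))
          + ENNReal.ofReal (exp 1 / (1 - c * τ₂)) := by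
        gcongr
        · exact lintegral_exp_mul_le_of_tail hη hη₀ hη_tail (by norm_num) (by norm_num)
        · exact lintegral_exp_mul_le_of_tail hη hη₀ hη_tail (by positivity) hcτ
    _ = ENNReal.ofReal (2 * exp 1 * exp ((c * τ₁) ^ 2 / 2) + exp 1 / (1 - c * τ₂)) := by
        rw [← ENNReal.ofReal_mul (exp_pos _).le, ← ENNReal.ofReal_add (by positivity)
          (div_nonneg (exp_pos _).le (by linarith))]
        ring_nf

lemma lintegral_exp_mul_abs_le {Ω : Type*} [MeasurableSpace Ω] {μ : Measure Ω}
    [IsProbabilityMeasure μ] {ξ : Ω → ℝ} (hξ : Measurable ξ) {τ₁ τ₂ : ℝ} (hτ₁ : 0 ≤ τ₁)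
    (hτ₂ : 0 ≤ τ₂)
    (htail : ∀ t, 1 ≤ t → μ {ω | max (τ₁ * √t) (τ₂ * t) < |ξ ω|} ≤ ENNReal.ofReal (exp (-t)))
    {c : ℝ} (hc : 0 ≤ c) (hcτ : c * τ₂ < 1) :
    ∫⁻ ω, ENNReal.ofReal (exp (c * |ξ ω|)) ∂μ ≤
      ENNReal.ofReal (2 * exp 1 * exp ((c * τ₁) ^ 2 / 2) + exp 1 / (1 - c * τ₂)) := by
  set bound : ℝ → ℝ := fun ε =>
    2 * exp 1 * exp ((c * (τ₁ + ε)) ^ 2 / 2) + exp 1 / (1 - c * (τ₂ + ε))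
  have hcont : ContinuousAt bound 0 :=
    ContinuousAt.add (by fun_prop) (continuousAt_const.div (by fun_prop) (by simp; linarith))
  have hsmall : ∀ᶠ ε in 𝓝[>] (0 : ℝ), c * (τ₂ + ε) < 1 :=
    nhdsWithin_le_nhds (ContinuousAt.eventually_lt (by fun_prop) continuousAt_const
      (by simpa using hcτ))
  have hlim : Tendsto bound (𝓝[>] 0) (𝓝 (bound 0)) := hcont.tendsto.mono_left nhdsWithin_le_nhds
  simp only [bound, add_zero] at hlim
  refine ge_of_tendsto ((ENNReal.continuous_ofReal.tendsto _).comp hlim) ?_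
  filter_upwards [hsmall, self_mem_nhdsWithin] with ε hε (hε₀ : 0 < ε)
  refine lintegral_exp_mul_abs_le_of_pos hξ (by linarith) (by linarith)
    (fun t ht => (measure_mono fun ω hω => ?_).trans (htail t ht)) hc hε
  have ht₀ : 0 ≤ t := by linarith
  simp only [mem_ofPred_eq] at hω ⊢
  refine lt_of_le_of_lt (max_le_max ?_ ?_) hω <;> gcongr <;> linarith

lemma IsLoss.sq_le {f : ℝ → ℝ} {c₁ c₂ : ℝ} (hf : IsLoss f c₁ c₂) (x : ℝ) :
    f x ^ 2 ≤ c₁ ^ 2 * exp (2 * c₂ * |x|) := by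
  have habs : f x = f |x| := by
    rcases abs_choice x with h | h <;> rw [h]
    rw [hf.even]
  calc f x ^ 2 ≤ (c₁ * exp (c₂ * |x|)) ^ 2 := by
        rw [habs]
        exact pow_le_pow_left₀ (hf.nonneg _) (hf.bound _ (abs_nonneg x)) 2
    _ = c₁ ^ 2 * exp (2 * c₂ * |x|) := by
        rw [mul_pow, ← exp_nat_mul]
        ring_nf

lemma IsLoss.lintegral_sq_comp_le {Ω : Type*} [MeasurableSpace Ω] {μ : Measure Ω}
    {f : ℝ → ℝ} {c₁ c₂ : ℝ} (hf : IsLoss f c₁ c₂) (ξ : Ω → ℝ) :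
    ∫⁻ ω, ENNReal.ofReal (f (ξ ω) ^ 2) ∂μ ≤
      ENNReal.ofReal (c₁ ^ 2) * ∫⁻ ω, ENNReal.ofReal (exp (2 * c₂ * |ξ ω|)) ∂μ := by
  rw [← lintegral_const_mul' _ _ ENNReal.ofReal_ne_top]
  refine lintegral_mono fun ω => ?_
  rw [← ENNReal.ofReal_mul (sq_nonneg _)]
  exact ENNReal.ofReal_le_ofReal (hf.sq_le _)

/-- **Lemma 4.8.** If for all `t ≥ 1`, with probability at least `1 - e^{-t}`,
`|ξ| ≤ τ₁√t ∨ τ₂ t`, and `ℓ` satisfies Assumption 3.1 with `2c₂τ₂ < 1`, then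
`E ℓ²(ξ) ≤ 2e√(2π) c₁² e^{2c₂²τ₁²} + e c₁²/(1 - 2c₂τ₂)`. -/
theorem stmt12 (Ω : Type) [MeasurableSpace Ω] (μ : Measure Ω) [IsProbabilityMeasure μ]
    (ξ : Ω → ℝ) (hξ : Measurable ξ) (τ₁ τ₂ : ℝ) (hτ₁ : 0 ≤ τ₁) (hτ₂ : 0 ≤ τ₂)
    (hconc : ∀ t : ℝ, 1 ≤ t →
      1 - Real.exp (-t) ≤ (μ {ω | |ξ ω| ≤ max (τ₁ * Real.sqrt t) (τ₂ * t)}).toReal)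
    (loss : ℝ → ℝ) (c₁ c₂ : ℝ) (hloss : IsLoss loss c₁ c₂) (h2 : 2 * c₂ * τ₂ < 1) :
    ∫ ω, loss (ξ ω) ^ 2 ∂μ ≤
      2 * Real.exp 1 * Real.sqrt (2 * Real.pi) * c₁ ^ 2 * Real.exp (2 * c₂ ^ 2 * τ₁ ^ 2) +
        Real.exp 1 * c₁ ^ 2 / (1 - 2 * c₂ * τ₂) := by
  have hmgf := lintegral_exp_mul_abs_le hξ hτ₁ hτ₂
    (fun t ht => measure_lt_le_ofReal_of_one_sub_le hξ.abs (hconc t ht))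
    (by linarith [hloss.c₂_pos] : 0 ≤ 2 * c₂) h2
  have hlintegral : ∫⁻ ω, ENNReal.ofReal ‖loss (ξ ω) ^ 2‖ ∂μ ≤ ENNReal.ofReal
      (c₁ ^ 2 * (2 * exp 1 * exp ((2 * c₂ * τ₁) ^ 2 / 2) + exp 1 / (1 - 2 * c₂ * τ₂))) := by
    simp_rw [norm_of_nonneg (sq_nonneg _), ENNReal.ofReal_mul (sq_nonneg c₁)]
    exact (hloss.lintegral_sq_comp_le ξ).trans (by gcongr)
  have h1le : (1 : ℝ) ≤ √(2 * π) := one_le_sqrt.2 (by linarith [pi_gt_three])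
  calc ∫ ω, loss (ξ ω) ^ 2 ∂μ ≤ ‖∫ ω, loss (ξ ω) ^ 2 ∂μ‖ := le_norm_self _
    _ ≤ c₁ ^ 2 * (2 * exp 1 * exp ((2 * c₂ * τ₁) ^ 2 / 2) + exp 1 / (1 - 2 * c₂ * τ₂)) :=
        (norm_integral_le_lintegral_norm _).trans
          (ENNReal.toReal_le_of_le_ofReal (by positivity) hlintegral)
    _ = 2 * exp 1 * 1 * c₁ ^ 2 * exp (2 * c₂ ^ 2 * τ₁ ^ 2) +
          exp 1 * c₁ ^ 2 / (1 - 2 * c₂ * τ₂) := by ring_nf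
    _ ≤ _ := by gcongr

end KLN
end
end

section
/- Let ℍ be a finite-dimensional Hilbert space, Σ a non-singular positive self-adjoint operator on ℍ with μ_r a simple eigenvalue, H a self-adjoint operator, u ∈ ℍ, n ≥ 1, and c > 0 such that c‖H‖_1/√n < δ for some δ > 0 with δ < ‖Σ^{-1}‖^{-1} and δ < ḡ_r/4. For |t| ≤ c set Σ_t := Σ + tH/√n, let θ_t be the unit eigenvector of Σ_t corresponding to its unique eigenvalue near μ_r, chosen so that ⟨θ_t, θ_{t'}⟩ ≥ 0 for all t, t' ∈ [−c, c], let g(t) := ⟨θ_t, u⟩, and let L_t(H) := P_r(Σ_t)HC_r(Σ_t) + C_r(Σ_t)HP_r(Σ_t). Then g is continuously differentiable on [−c, c] with (i) g'(t) = n^{−1/2}⟨L_t(H)θ_t, u⟩ for all t ∈ [−c, c], and (ii) |g'(t) − g'(0)| ≤ C |t| ‖H‖² ‖u‖/(g_r² n) for all t ∈ [−c, c], for an absolute constant C > 0. -/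
open MeasureTheory ProbabilityTheory Filter Set
open scoped RealInnerProductSpace Topology NNReal ENNReal

noncomputable section

namespace KLN

variable {H : Type*} [NormedAddCommGroup H] [InnerProductSpace ℝ H] [CompleteSpace H]

section AuxKLN

variable [FiniteDimensional ℝ H]

lemma parsevalKLN (b : OrthonormalBasis (Fin (Module.finrank ℝ H)) ℝ H)
    (y : H) : ‖y‖ ^ 2 = ∑ i, ⟪b i, y⟫ ^ 2 := by
  have h := b.sum_inner_mul_inner y y
  rw [← real_inner_self_eq_norm_sq] at *
  rw [← h]
  congr 1; ext i; rw [real_inner_comm y (b i), sq]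

lemma resolvent_lb (T : H →L[ℝ] H)
    (hT : ∀ x y : H, ⟪T x, y⟫ = ⟪x, T y⟫) (α G : ℝ) (hG : 0 ≤ G) (x : H)
    (hx : ∀ (β : ℝ) (v : H), T v = β • v → |β - α| < G → ⟪v, x⟫ = 0) :
    G * ‖x‖ ≤ ‖T x - α • x‖ := by
  have hTsym : (T : H →ₗ[ℝ] H).IsSymmetric := fun x y => hT x y
  set d := Module.finrank ℝ H
  have hd : Module.finrank ℝ H = d := rfl
  set b := hTsym.eigenvectorBasis hd
  set β := hTsym.eigenvalues hd
  have happ : ∀ i, T (b i) = β i • b i := fun i => hTsym.apply_eigenvectorBasis hd i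
  have key : ∀ i, ⟪b i, T x - α • x⟫ = (β i - α) * ⟪b i, x⟫ := by
    intro i
    rw [inner_sub_right, real_inner_smul_right]
    rw [real_inner_comm (T x) (b i), hT x (b i), happ i, real_inner_smul_right,
      real_inner_comm x (b i)]
    ring
  have hsq : ‖T x - α • x‖ ^ 2 = ∑ i, ((β i - α) * ⟪b i, x⟫) ^ 2 := by
    rw [parsevalKLN b]
    exact Finset.sum_congr rfl fun i _ => by rw [key i]
  have hxsq : ‖x‖ ^ 2 = ∑ i, ⟪b i, x⟫ ^ 2 := parsevalKLN b x
  have hterm : ∀ i, G ^ 2 * ⟪b i, x⟫ ^ 2 ≤ ((β i - α) * ⟪b i, x⟫) ^ 2 := by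
    intro i
    by_cases hi : |β i - α| < G
    · rw [hx (β i) (b i) (happ i) hi]; simp
    · push_neg at hi
      rw [mul_pow]
      have : G ^ 2 ≤ (β i - α) ^ 2 := by
        have := sq_abs (β i - α) ▸ pow_le_pow_left₀ hG hi 2
        linarith [sq_abs (β i - α), pow_le_pow_left₀ hG hi 2]
      nlinarith [sq_nonneg (⟪b i, x⟫)]
  have h1 : (G * ‖x‖) ^ 2 ≤ ‖T x - α • x‖ ^ 2 := by
    rw [hsq, mul_pow, hxsq, Finset.mul_sum]
    exact Finset.sum_le_sum fun i _ => hterm i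
  have h2 : 0 ≤ G * ‖x‖ := mul_nonneg hG (norm_nonneg x)
  nlinarith [norm_nonneg (T x - α • x)]

lemma exists_near_eig (T : H →L[ℝ] H)
    (hT : ∀ x y : H, ⟪T x, y⟫ = ⟪x, T y⟫) (α G : ℝ) (hG : 0 < G) (v : H) (hv : ‖v‖ = 1)
    (h : ‖T v - α • v‖ < G) :
    ∃ (β : ℝ) (w : H), ‖w‖ = 1 ∧ T w = β • w ∧ |β - α| < G := by
  by_contra hcon
  push_neg at hcon
  have hx : ∀ (β : ℝ) (w : H), T w = β • w → |β - α| < G → ⟪w, v⟫ = 0 := by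
    intro β w hw hβ
    rcases eq_or_ne w 0 with rfl | hw0
    · simp
    · exfalso
      have hnorm : ‖(‖w‖⁻¹ • w)‖ = 1 := norm_smul_inv_norm hw0
      have heig : T (‖w‖⁻¹ • w) = β • (‖w‖⁻¹ • w) := by
        rw [_root_.map_smul, hw, smul_comm]
      exact absurd hβ (not_lt.2 (hcon β _ hnorm heig))
  have := resolvent_lb T hT α G hG.le v hx
  rw [hv, mul_one] at this
  linarith

omit [FiniteDimensional ℝ H] in
lemma inner_lb (θ0 v w : H) (h0 : ‖θ0‖ = 1) (hv : ‖v‖ = 1) (hw : ‖w‖ = 1)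
    (hqv : ‖v - ⟪θ0, v⟫ • θ0‖ ≤ 1 / 2) (hqw : ‖w - ⟪θ0, w⟫ • θ0‖ ≤ 1 / 2) :
    1 / 2 ≤ |⟪v, w⟫| := by
  set a := ⟪θ0, v⟫
  set b := ⟪θ0, w⟫
  set Qv := v - a • θ0 with hQv
  set Qw := w - b • θ0 with hQw
  have h00 : ⟪θ0, θ0⟫ = 1 := by
    rw [real_inner_self_eq_norm_sq, h0]; norm_num
  have hoQv : ⟪θ0, Qv⟫ = 0 := by
    rw [hQv, inner_sub_right, real_inner_smul_right, h00]; ring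
  have hoQw : ⟪θ0, Qw⟫ = 0 := by
    rw [hQw, inner_sub_right, real_inner_smul_right, h00]; ring
  have hvdec : v = a • θ0 + Qv := by rw [hQv]; abel
  have hwdec : w = b • θ0 + Qw := by rw [hQw]; abel
  have hva : (1 : ℝ) = a ^ 2 + ‖Qv‖ ^ 2 := by
    have := norm_add_sq_real (a • θ0) Qv
    rw [← hvdec, hv, real_inner_smul_left, hoQv, norm_smul, h0] at this
    simp at this
    nlinarith [this]
  have hwa : (1 : ℝ) = b ^ 2 + ‖Qw‖ ^ 2 := by
    have := norm_add_sq_real (b • θ0) Qw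
    rw [← hwdec, hw, real_inner_smul_left, hoQw, norm_smul, h0] at this
    simp at this
    nlinarith [this]
  have hinner : ⟪v, w⟫ = a * b + ⟪Qv, Qw⟫ := by
    rw [hvdec, hwdec, inner_add_left, inner_add_right, inner_add_right,
      real_inner_smul_left, real_inner_smul_left, real_inner_smul_right, hoQw, h00,
      real_inner_comm (b • θ0) Qv]
    rw [real_inner_smul_left, hoQv]
    ring
  have hQQ : |⟪Qv, Qw⟫| ≤ 1 / 4 := by
    calc |⟪Qv, Qw⟫| ≤ ‖Qv‖ * ‖Qw‖ := abs_real_inner_le_norm _ _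
    _ ≤ (1/2) * (1/2) := by
        apply mul_le_mul hqv hqw (norm_nonneg _) (by norm_num)
    _ = 1/4 := by norm_num
  have hab : 3 / 4 ≤ |a * b| := by
    have h1 : 3 / 4 ≤ a ^ 2 := by nlinarith [sq_nonneg (‖Qv‖ - 1/2), norm_nonneg Qv]
    have h2 : 3 / 4 ≤ b ^ 2 := by nlinarith [sq_nonneg (‖Qw‖ - 1/2), norm_nonneg Qw]
    nlinarith [abs_nonneg (a * b), sq_abs (a * b)]
  calc (1:ℝ)/2 ≤ |a * b| - |⟪Qv, Qw⟫| := by linarith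
  _ ≤ |a * b + ⟪Qv, Qw⟫| := by
      have := abs_add_le (a * b + ⟪Qv, Qw⟫) (-⟪Qv, Qw⟫)
      simp at this
      linarith [abs_neg (⟪Qv, Qw⟫), abs_mul a b]
  _ = |⟪v, w⟫| := by rw [hinner]

omit [FiniteDimensional ℝ H] in
lemma eig_mem_spectrum (T : H →L[ℝ] H) (β : ℝ) (v : H) (hv : v ≠ 0)
    (h : T v = β • v) : β ∈ spectrum ℝ T := by
  rw [spectrum.mem_iff]
  intro hU
  have h0 : (algebraMap ℝ (H →L[ℝ] H) β - T) v = 0 := by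
    rw [Algebra.algebraMap_eq_smul_one]
    simp [ContinuousLinearMap.sub_apply, h]
  have := congrArg (fun w => hU.unit.inv w) h0
  simp only [map_zero] at this
  apply hv
  calc v = (hU.unit.inv * hU.unit.val) v := by
        rw [Units.inv_eq_val_inv, hU.unit.inv_mul]; rfl
  _ = hU.unit.inv ((algebraMap ℝ (H →L[ℝ] H) β - T) v) := rfl
  _ = 0 := this

lemma lam_eq_zero (A : H →L[ℝ] H) (j : ℕ)
    (hj : Module.finrank ℝ H ≤ j) : lam A j = 0 := by
  have : IsEmpty {V : Submodule ℝ H // Module.finrank ℝ V = j + 1} := by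
    constructor
    rintro ⟨V, hV⟩
    have := Submodule.finrank_le V
    omega
  rw [lam, iSup_of_empty']
  exact Real.sSup_empty

lemma opNorm_le_nuclear (A : H →L[ℝ] H)
    (hA : ∀ x y : H, ⟪A x, y⟫ = ⟪x, A y⟫) : ‖A‖ ≤ nuclearNormSA A := by
  have hsummable : Summable fun j => Real.sqrt (lam (A.comp A) j) := by
    apply summable_of_ne_finset_zero (s := Finset.range (Module.finrank ℝ H))
    intro j hj
    rw [Finset.mem_range, not_lt] at hj
    rw [lam_eq_zero _ j hj, Real.sqrt_zero]
  have hterm : ‖A‖ ≤ Real.sqrt (lam (A.comp A) 0) := by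
    rcases eq_or_lt_of_le (Nat.zero_le (Module.finrank ℝ H)) with h0 | h0
    · have : Subsingleton H := by
        have := Module.finrank_zero_iff (R := ℝ) (M := H) |>.1 h0.symm
        exact this
      have : A = 0 := by
        ext x; exact Subsingleton.elim _ _
      rw [this]
      simp [Real.sqrt_nonneg]
    · have hbdd : BddAbove (Set.range fun V : {V : Submodule ℝ H // Module.finrank ℝ V = 0 + 1} =>
          ⨅ x : {x : H // x ∈ V.1 ∧ ‖x‖ = 1}, ⟪(A.comp A) x.1, x.1⟫) := by
        refine ⟨‖A.comp A‖, ?_⟩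
        rintro y ⟨V, rfl⟩
        have hVne : V.1 ≠ ⊥ := by
          intro hbot
          have := V.2
          rw [hbot] at this
          simp at this
        obtain ⟨v, hvV, hv0⟩ := Submodule.exists_mem_ne_zero_of_ne_bot hVne
        have hunit : ‖(‖v‖⁻¹ • v)‖ = 1 := norm_smul_inv_norm hv0
        have hmem : ‖v‖⁻¹ • v ∈ V.1 := V.1.smul_mem _ hvV
        have hne : Nonempty {x : H // x ∈ V.1 ∧ ‖x‖ = 1} := ⟨⟨_, hmem, hunit⟩⟩
        have hbddbelow : BddBelow (Set.range fun x : {x : H // x ∈ V.1 ∧ ‖x‖ = 1} =>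
            ⟪(A.comp A) x.1, x.1⟫) := by
          refine ⟨0, ?_⟩
          rintro z ⟨x, rfl⟩
          have : ⟪(A.comp A) x.1, x.1⟫ = ‖A x.1‖ ^ 2 := by
            rw [ContinuousLinearMap.comp_apply, hA, real_inner_self_eq_norm_sq]
          simp only []
          rw [this]; positivity
        refine ciInf_le_of_le hbddbelow ⟨_, hmem, hunit⟩ ?_
        calc ⟪(A.comp A) (‖v‖⁻¹ • v), ‖v‖⁻¹ • v⟫ ≤ ‖(A.comp A) (‖v‖⁻¹ • v)‖ * ‖(‖v‖⁻¹ • v)‖ :=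
              real_inner_le_norm _ _
        _ ≤ ‖A.comp A‖ * ‖(‖v‖⁻¹ • v)‖ * ‖(‖v‖⁻¹ • v)‖ := by
              have := (A.comp A).le_opNorm (‖v‖⁻¹ • v)
              nlinarith [norm_nonneg ((‖v‖⁻¹ : ℝ) • v)]
        _ = ‖A.comp A‖ := by rw [hunit]; ring
      have hkey : ∀ x : H, ‖x‖ = 1 → ‖A x‖ ^ 2 ≤ lam (A.comp A) 0 := by
        intro x hx
        have hx0 : x ≠ 0 := by intro h; rw [h] at hx; simp at hx
        set V : Submodule ℝ H := Submodule.span ℝ {x} with hV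
        have hfr : Module.finrank ℝ V = 0 + 1 := by
          rw [hV, finrank_span_singleton hx0]
        have hne : Nonempty {y : H // y ∈ V ∧ ‖y‖ = 1} :=
          ⟨⟨x, Submodule.mem_span_singleton_self x, hx⟩⟩
        have hval : ∀ y : {y : H // y ∈ V ∧ ‖y‖ = 1}, ⟪(A.comp A) y.1, y.1⟫ = ‖A x‖ ^ 2 := by
          rintro ⟨y, hyV, hy1⟩
          obtain ⟨a, rfl⟩ := Submodule.mem_span_singleton.1 hyV
          have ha : a ^ 2 = 1 := by
            have : ‖a • x‖ = |a| * ‖x‖ := by rw [norm_smul, Real.norm_eq_abs]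
            rw [hy1, hx, mul_one] at this
            nlinarith [sq_abs a, this]
          simp only [ContinuousLinearMap.comp_apply, _root_.map_smul, real_inner_smul_left,
            real_inner_smul_right]
          rw [hA, real_inner_self_eq_norm_sq]
          nlinarith [ha]
        have hinf : (⨅ y : {y : H // y ∈ V ∧ ‖y‖ = 1}, ⟪(A.comp A) y.1, y.1⟫) = ‖A x‖ ^ 2 := by
          rw [iInf_congr hval]
          exact ciInf_const
        calc ‖A x‖ ^ 2 = _ := hinf.symm
        _ ≤ lam (A.comp A) 0 := le_ciSup hbdd ⟨V, hfr⟩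
      apply ContinuousLinearMap.opNorm_le_bound _ (Real.sqrt_nonneg _)
      intro x
      rcases eq_or_ne x 0 with rfl | hx0
      · simp
      · have hunit : ‖(‖x‖⁻¹ • x)‖ = 1 := norm_smul_inv_norm hx0
        have h1 := hkey _ hunit
        have h2 : ‖A (‖x‖⁻¹ • x)‖ ≤ Real.sqrt (lam (A.comp A) 0) := by
          rw [show (lam (A.comp A) 0) = Real.sqrt (lam (A.comp A) 0) ^ 2 from
            (Real.sq_sqrt (le_trans (by positivity) h1)).symm] at h1
          nlinarith [norm_nonneg (A ((‖x‖⁻¹ : ℝ) • x)), Real.sqrt_nonneg (lam (A.comp A) 0)]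
        have h3 : A (‖x‖⁻¹ • x) = ‖x‖⁻¹ • A x := _root_.map_smul A _ _
        rw [h3, norm_smul, Real.norm_eq_abs, abs_inv, abs_norm] at h2
        have hxpos : (0:ℝ) < ‖x‖ := norm_pos_iff.2 hx0
        calc ‖A x‖ = ‖x‖ * (‖x‖⁻¹ * ‖A x‖) := by field_simp
        _ ≤ ‖x‖ * Real.sqrt (lam (A.comp A) 0) := by
            exact mul_le_mul_of_nonneg_left h2 hxpos.le
        _ = Real.sqrt (lam (A.comp A) 0) * ‖x‖ := by ring
  refine hterm.trans ?_
  exact Summable.le_tsum hsummable 0 fun j _ => Real.sqrt_nonneg _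

end AuxKLN

lemma hasDeriv_of_quadratic {f : ℝ → ℝ} {I : Set ℝ} {t f' K : ℝ}
    (h : ∀ s ∈ I, |f s - f t - (s - t) * f'| ≤ K * (s - t) ^ 2) :
    HasDerivWithinAt f f' I t := by
  rw [hasDerivWithinAt_iff_isLittleO]
  have hO : (fun s => f s - f t - (s - t) • f') =O[𝓝[I] t] fun s => (s - t) ^ 2 := by
    apply Asymptotics.IsBigO.of_bound (max K 0)
    filter_upwards [self_mem_nhdsWithin] with s hs
    have := h s hs
    have h2 : |f s - f t - (s - t) * f'| ≤ max K 0 * (s - t) ^ 2 := by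
      refine this.trans (mul_le_mul_of_nonneg_right (le_max_left _ _) (sq_nonneg _))
    simpa [Real.norm_eq_abs, abs_pow, sq_abs] using h2
  refine hO.trans_isLittleO ?_
  have h1 : (fun s : ℝ => s - t) =o[𝓝[I] t] (fun _ => (1 : ℝ)) := by
    rw [Asymptotics.isLittleO_one_iff]
    have : Tendsto (fun s : ℝ => s - t) (𝓝 t) (𝓝 0) := by
      have := ((continuous_id.sub continuous_const).tendsto t :
        Tendsto (fun s : ℝ => s - t) (𝓝 t) (𝓝 (t - t)))
      have h' : Tendsto (fun s : ℝ => s - t) (𝓝 t) (𝓝 (t - t)) := this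
      rw [sub_self] at h'; exact h'
    exact this.mono_left nhdsWithin_le_nhds
  have h2 : (fun s : ℝ => s - t) =O[𝓝[I] t] (fun s => s - t) := Asymptotics.isBigO_refl _ _
  have := h1.mul_isBigO h2
  simpa [sq, one_mul] using this

lemma continuousOn_of_lip {f : ℝ → ℝ} {I : Set ℝ} {M : ℝ}
    (h : ∀ t ∈ I, ∀ s ∈ I, |f t - f s| ≤ M * |t - s|) : ContinuousOn f I := by
  refine (LipschitzOnWith.of_dist_le_mul (K := Real.toNNReal M) ?_).continuousOn
  intro x hx y hy
  rw [Real.dist_eq, Real.dist_eq]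
  refine (h x hx y hy).trans ?_
  have : M ≤ (Real.toNNReal M : ℝ) := Real.le_coe_toNNReal M
  have habs : (0:ℝ) ≤ |x - y| := abs_nonneg _
  nlinarith

set_option maxHeartbeats 4000000 in
/-- **Lemma 6.1.** In finite dimensions, for `Σ_t = Σ + tH/√n` and `g(t) = ⟨θ_t, u⟩`
(with `θ_t` the aligned unit eigenvector of `Σ_t` near `μ_r`, and `v t = L_t(H)θ_t`
characterized as the reduced resolvent applied to `Hθ_t`): `g` is continuously
differentiable on `[-c, c]` with `g'(t) = n^{-1/2}⟨L_t(H)θ_t, u⟩` and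
`|g'(t) - g'(0)| ≲ |t|‖H‖²‖u‖/(g_r² n)`. -/
theorem stmt19 :
    ∃ C : ℝ, 0 < C ∧
      ∀ (H : Type) (_ : NormedAddCommGroup H),
        ∀ (_ : InnerProductSpace ℝ H) (_ : CompleteSpace H) (_ : FiniteDimensional ℝ H)
          (S : CovOp H) (r : ℕ) (θr : H) (Hop Sinv : H →L[ℝ] H) (u : H) (n : ℕ)
          (c δ : ℝ) (θ : ℝ → H) (ρ : ℝ → ℝ) (v : ℝ → H),
          S.SimpleVec r θr →
          Function.Injective S.toCLM →
          (∀ x y : H, ⟪Hop x, y⟫ = ⟪x, Hop y⟫) →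
          1 ≤ n → 0 < c →
          Sinv.comp S.toCLM = ContinuousLinearMap.id ℝ H →
          S.toCLM.comp Sinv = ContinuousLinearMap.id ℝ H →
          c * nuclearNormSA Hop / Real.sqrt n < δ →
          δ < ‖Sinv‖⁻¹ →
          δ < S.gbar r / 4 →
          (∀ t ∈ Icc (-c) c, ‖θ t‖ = 1) →
          (∀ t ∈ Icc (-c) c,
            (S.toCLM + (t / Real.sqrt n) • Hop) (θ t) = ρ t • θ t) →
          (∀ t ∈ Icc (-c) c, |ρ t - S.μ r| < S.g r / 2) →
          (∀ t ∈ Icc (-c) c, ∀ t' ∈ Icc (-c) c, 0 ≤ ⟪θ t, θ t'⟫) →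
          (∀ t ∈ Icc (-c) c, ⟪v t, θ t⟫ = 0 ∧
            ρ t • v t - (S.toCLM + (t / Real.sqrt n) • Hop) (v t) =
              Hop (θ t) - ⟪θ t, Hop (θ t)⟫ • θ t) →
          (∀ t ∈ Icc (-c) c,
              HasDerivWithinAt (fun s => ⟪θ s, u⟫)
                ((Real.sqrt n)⁻¹ * ⟪v t, u⟫) (Icc (-c) c) t) ∧
            ContinuousOn (fun t => (Real.sqrt n)⁻¹ * ⟪v t, u⟫) (Icc (-c) c) ∧
            ∀ t ∈ Icc (-c) c,
              |(Real.sqrt n)⁻¹ * ⟪v t, u⟫ - (Real.sqrt n)⁻¹ * ⟪v 0, u⟫| ≤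
                C * |t| * ‖Hop‖ ^ 2 * ‖u‖ / (S.g r ^ 2 * n) := by
  classical
  refine ⟨2000, by norm_num, ?_⟩
  intro K inst1 inst2 inst3 inst4 S r θr Hop Sinv u n c δ θ ρ v hsimple hinj hHsym hn hc
    hSinv1 hSinv2 hsmall hδinv hδg hθn hθeig hρnear halign hvspec
  letI := inst1; letI := inst2; letI := inst3; letI := inst4
  -- basic numeric facts
  have hn0 : (0:ℝ) < (n:ℝ) := by exact_mod_cast Nat.lt_of_lt_of_le Nat.zero_lt_one hn
  have hsq0 : 0 < Real.sqrt (n:ℝ) := Real.sqrt_pos.2 hn0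
  have hnn : Real.sqrt (n:ℝ) * Real.sqrt (n:ℝ) = (n:ℝ) := Real.mul_self_sqrt hn0.le
  have hnuc0 : 0 ≤ nuclearNormSA (H := K) Hop := tsum_nonneg fun j => Real.sqrt_nonneg _
  have hδ0 : 0 < δ := lt_of_le_of_lt (by positivity) hsmall
  have hgbar : S.gbar r ≤ S.g r := by
    have hbdd : BddBelow (Set.range fun s : Fin (r+1) => S.g s) := by
      refine ⟨0, ?_⟩
      rintro x ⟨i, rfl⟩
      exact Metric.infDist_nonneg
    have := ciInf_le hbdd (⟨r, Nat.lt_succ_self r⟩ : Fin (r+1))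
    simpa [CovOp.gbar] using this
  have hδg4 : δ < S.g r / 4 := lt_of_lt_of_le hδg (by linarith)
  have hg0 : 0 < S.g r := by linarith
  have hopH : ‖Hop‖ ≤ nuclearNormSA Hop := opNorm_le_nuclear Hop hHsym
  have habsI : ∀ t ∈ Icc (-c) c, |t| ≤ c := fun t ht => abs_le.2 ⟨ht.1, ht.2⟩
  have hsmt : ∀ t ∈ Icc (-c) c, |t| * ‖Hop‖ / Real.sqrt n < δ := by
    intro t ht
    calc |t| * ‖Hop‖ / Real.sqrt n ≤ c * nuclearNormSA Hop / Real.sqrt n := by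
          rw [div_eq_mul_inv, div_eq_mul_inv]
          exact mul_le_mul_of_nonneg_right
            (mul_le_mul (habsI t ht) hopH (norm_nonneg _) hc.le) (by positivity)
    _ < δ := hsmall
  have hI0 : (0:ℝ) ∈ Icc (-c) c := ⟨by linarith, by linarith⟩
  -- symmetry of S.toCLM
  have hBsym : ∀ x y : K, ⟪S.toCLM x, y⟫ = ⟪x, S.toCLM y⟫ := by
    intro x y
    have h1 : HasSum (fun s => ⟪y, S.μ s • S.P s x⟫) ⟪y, S.toCLM x⟫ :=
      (S.decomp x).mapL (innerSL ℝ y)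
    have h2 : HasSum (fun s => ⟪x, S.μ s • S.P s y⟫) ⟪x, S.toCLM y⟫ :=
      (S.decomp y).mapL (innerSL ℝ x)
    have he : (fun s => ⟪y, S.μ s • S.P s x⟫) = fun s => ⟪x, S.μ s • S.P s y⟫ := by
      funext s
      rw [real_inner_smul_right, real_inner_smul_right, real_inner_comm (S.P s x) y,
        S.P_symm s x y]
    rw [he] at h1
    rw [real_inner_comm y (S.toCLM x)]
    exact h1.unique h2
  -- θr facts
  have hθr1 : ‖θr‖ = 1 := hsimple.1
  have hPr : ∀ x : K, S.P r x = ⟪θr, x⟫ • θr := hsimple.2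
  have hθrθr : ⟪θr, θr⟫ = 1 := by
    rw [real_inner_self_eq_norm_sq, hθr1]; norm_num
  have hPθr : S.P r θr = θr := by rw [hPr, hθrθr, one_smul]
  have hPsθr : ∀ s, s ≠ r → S.P s θr = 0 := by
    intro s hs
    rw [← hPθr]
    exact S.P_orth s r hs θr
  have hBθr : S.toCLM θr = S.μ r • θr := by
    have h1 : HasSum (fun s => S.μ s • S.P s θr) (S.μ r • θr) := by
      have := hasSum_single (f := fun s => S.μ s • S.P s θr) r
        (fun s hs => by simp only [hPsθr s hs, smul_zero])
      simpa [hPθr] using this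
    exact (S.decomp θr).unique h1
  have hPuB : ∀ (w : K) (j : ℕ), S.P j (S.toCLM w) = S.μ j • S.P j w := by
    intro w j
    have h1 : HasSum (fun s => S.P j (S.μ s • S.P s w)) (S.P j (S.toCLM w)) :=
      (S.decomp w).mapL (S.P j)
    have h2 : HasSum (fun s => S.P j (S.μ s • S.P s w)) (S.μ j • S.P j w) := by
      have := hasSum_single (f := fun s => S.P j (S.μ s • S.P s w)) j
        (fun s hs => by simp only [_root_.map_smul, S.P_orth j s (Ne.symm hs) w, smul_zero])
      simpa [_root_.map_smul, S.P_idem j w] using this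
    exact h1.unique h2
  have hspecB : ∀ (β : ℝ) (w : K), w ≠ 0 → S.toCLM w = β • w → β ≠ S.μ r →
      S.g r ≤ |β - S.μ r| := by
    intro β w hw0 hw hβ
    have hmem : β ∈ spectrum ℝ S.toCLM \ {S.μ r} := ⟨eig_mem_spectrum _ β w hw0 hw, hβ⟩
    have h1 := Metric.infDist_le_dist_of_mem (x := S.μ r) hmem
    have h2 : S.g r = Metric.infDist (S.μ r) (spectrum ℝ S.toCLM \ {S.μ r}) := rfl
    rw [h2]
    rw [Real.dist_eq, abs_sub_comm] at h1
    exact h1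
  have hspanB : ∀ (β : ℝ) (w : K), S.toCLM w = β • w → |β - S.μ r| < S.g r →
      w = ⟪θr, w⟫ • θr := by
    intro β w hw hβ
    rcases eq_or_ne w 0 with rfl | hw0
    · simp
    have hβμ : β = S.μ r := by
      by_contra h
      exact absurd hβ (not_lt.2 (hspecB β w hw0 hw h))
    subst hβμ
    have hPu : ∀ j, j ≠ r → S.P j w = 0 := by
      intro j hj
      have h1 : S.P j (S.toCLM w) = S.μ j • S.P j w := hPuB w j
      rw [hw, _root_.map_smul] at h1
      have h2 : (S.μ r - S.μ j) • S.P j w = 0 := by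
        rw [sub_smul, h1, sub_self]
      have h3 : S.μ r - S.μ j ≠ 0 := sub_ne_zero.2 (fun h => hj (S.μ_anti.injective h).symm)
      exact (smul_eq_zero.1 h2).resolve_left h3
    have h1 : HasSum (fun s => S.μ s • S.P s w) (S.μ r • S.P r w) :=
      hasSum_single r (fun s hs => by rw [hPu s hs, smul_zero])
    have h2 := (S.decomp w).unique h1
    rw [hw] at h2
    have h3 : w = S.P r w := smul_right_injective K (ne_of_gt (S.μ_pos r)) h2
    rw [hPr] at h3
    exact h3
  have hresB : ∀ x : K, ⟪θr, x⟫ = 0 → S.g r * ‖x‖ ≤ ‖S.toCLM x - S.μ r • x‖ := by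
    intro x hx
    refine resolvent_lb _ hBsym _ _ hg0.le x ?_
    intro β w hw hβ
    rw [hspanB β w hw hβ, real_inner_smul_left, hx, mul_zero]
  -- the perturbed operator
  set A : ℝ → (K →L[ℝ] K) := fun t => S.toCLM + (t / Real.sqrt (n:ℝ)) • Hop with hA
  have hAapp : ∀ (t : ℝ) (x : K), A t x = S.toCLM x + (t / Real.sqrt n) • Hop x :=
    fun _ _ => rfl
  have hθeig' : ∀ t ∈ Icc (-c) c, A t (θ t) = ρ t • θ t := hθeig
  have hAsym : ∀ (t : ℝ) (x y : K), ⟪A t x, y⟫ = ⟪x, A t y⟫ := by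
    intro t x y
    rw [hAapp, hAapp, inner_add_left, inner_add_right, real_inner_smul_left,
      real_inner_smul_right, hBsym, hHsym]
  have hAsub : ∀ (t s : ℝ) (x : K), A t x - A s x = ((t - s) / Real.sqrt n) • Hop x := by
    intro t s x
    rw [hAapp, hAapp, sub_div, sub_smul]
    abel
  have habsdiv : ∀ x : ℝ, |x / Real.sqrt n| = |x| / Real.sqrt n := by
    intro x
    rw [abs_div, abs_of_nonneg (Real.sqrt_nonneg _)]
  have hHb : ∀ x : K, ‖Hop x‖ ≤ ‖Hop‖ * ‖x‖ := fun x => Hop.le_opNorm x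
  have hpertA : ∀ t ∈ Icc (-c) c, ∀ x : K, ‖A t x - S.toCLM x‖ ≤
      (|t| * ‖Hop‖ / Real.sqrt n) * ‖x‖ := by
    intro t ht x
    have h1 : A t x - S.toCLM x = (t / Real.sqrt n) • Hop x := by
      rw [hAapp]; abel
    rw [h1, norm_smul, Real.norm_eq_abs, habsdiv]
    calc |t| / Real.sqrt n * ‖Hop x‖ ≤ |t| / Real.sqrt n * (‖Hop‖ * ‖x‖) :=
          mul_le_mul_of_nonneg_left (hHb x) (by positivity)
    _ = |t| * ‖Hop‖ / Real.sqrt n * ‖x‖ := by ring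
  have hpertθ : ∀ t ∈ Icc (-c) c, ‖S.toCLM (θ t) - ρ t • θ t‖ < δ := by
    intro t ht
    have h1 : S.toCLM (θ t) - ρ t • θ t = -(A t (θ t) - S.toCLM (θ t)) := by
      rw [hθeig' t ht]; abel
    rw [h1, norm_neg]
    calc ‖A t (θ t) - S.toCLM (θ t)‖ ≤ (|t| * ‖Hop‖ / Real.sqrt n) * ‖θ t‖ :=
          hpertA t ht (θ t)
    _ = |t| * ‖Hop‖ / Real.sqrt n := by rw [hθn t ht, mul_one]
    _ < δ := hsmt t ht
  have hρδ : ∀ t ∈ Icc (-c) c, |ρ t - S.μ r| < δ := by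
    intro t ht
    obtain ⟨β', w', hw1, hw2, hw3⟩ :=
      exists_near_eig S.toCLM hBsym (ρ t) δ hδ0 (θ t) (hθn t ht) (hpertθ t ht)
    have hw0 : w' ≠ 0 := by
      intro h; rw [h] at hw1; simp at hw1
    have hβμ : β' = S.μ r := by
      by_contra h
      have h1 := hspecB β' w' hw0 hw2 h
      have h2 := hρnear t ht
      have h3 : |β' - S.μ r| ≤ |β' - ρ t| + |ρ t - S.μ r| := abs_sub_le _ _ _
      linarith
    have : |ρ t - S.μ r| = |β' - ρ t| := by rw [← hβμ, abs_sub_comm]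
    rw [this]; exact hw3
  have hloc : ∀ t ∈ Icc (-c) c, ∀ (β : ℝ) (w : K), ‖w‖ = 1 → A t w = β • w →
      |β - ρ t| < S.g r / 2 → |β - S.μ r| < δ := by
    intro t ht β w hw1 hw2 hβ
    have hBw : ‖S.toCLM w - β • w‖ < δ := by
      have h1 : S.toCLM w - β • w = -(A t w - S.toCLM w) := by rw [hw2]; abel
      rw [h1, norm_neg]
      calc ‖A t w - S.toCLM w‖ ≤ (|t| * ‖Hop‖ / Real.sqrt n) * ‖w‖ := hpertA t ht w
      _ = |t| * ‖Hop‖ / Real.sqrt n := by rw [hw1, mul_one]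
      _ < δ := hsmt t ht
    obtain ⟨β', w', h1, h2, h3⟩ := exists_near_eig S.toCLM hBsym β δ hδ0 w hw1 hBw
    have hw0 : w' ≠ 0 := by
      intro h; rw [h] at h1; simp at h1
    have hβ' : β' = S.μ r := by
      by_contra hne
      have h4 := hspecB β' w' hw0 h2 hne
      have h5 := hρδ t ht
      have e1 : |β' - S.μ r| ≤ |β' - β| + |β - ρ t| + |ρ t - S.μ r| := by
        have a1 := abs_sub_le β' β (S.μ r)
        have a2 := abs_sub_le β (ρ t) (S.μ r)
        linarith
      linarith
    have : |β - S.μ r| = |β' - β| := by rw [← hβ', abs_sub_comm]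
    rw [this]; exact h3
  have hQbound : ∀ t ∈ Icc (-c) c, ∀ (β : ℝ) (w : K), ‖w‖ = 1 → A t w = β • w →
      |β - S.μ r| < δ → ‖w - ⟪θr, w⟫ • θr‖ ≤ 1/2 := by
    intro t ht β w hw1 hw2 hβ
    set Qw := w - ⟪θr, w⟫ • θr with hQw
    have hQo : ⟪θr, Qw⟫ = 0 := by
      rw [hQw, inner_sub_right, real_inner_smul_right, hθrθr]; ring
    have h1 : S.g r * ‖Qw‖ ≤ ‖S.toCLM Qw - S.μ r • Qw‖ := hresB Qw hQo
    have h2 : S.toCLM Qw - S.μ r • Qw = S.toCLM w - S.μ r • w := by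
      rw [hQw, map_sub, _root_.map_smul, hBθr]
      module
    have h3 : ‖S.toCLM w - S.μ r • w‖ < 2 * δ := by
      have e : S.toCLM w - S.μ r • w = (S.toCLM w - A t w) + (β - S.μ r) • w := by
        rw [hw2, sub_smul]; abel
      rw [e]
      calc ‖(S.toCLM w - A t w) + (β - S.μ r) • w‖ ≤
            ‖S.toCLM w - A t w‖ + ‖(β - S.μ r) • w‖ := norm_add_le _ _
      _ < δ + δ := by
          apply add_lt_add_of_le_of_lt
          · rw [norm_sub_rev]
            calc ‖A t w - S.toCLM w‖ ≤ (|t| * ‖Hop‖ / Real.sqrt n) * ‖w‖ := hpertA t ht w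
            _ = |t| * ‖Hop‖ / Real.sqrt n := by rw [hw1, mul_one]
            _ ≤ δ := (hsmt t ht).le
          · rw [norm_smul, Real.norm_eq_abs, hw1, mul_one]
            exact hβ
      _ = 2 * δ := by ring
    rw [h2] at h1
    nlinarith
  have hQθ : ∀ t ∈ Icc (-c) c, ‖θ t - ⟪θr, θ t⟫ • θr‖ ≤ 1/2 :=
    fun t ht => hQbound t ht (ρ t) (θ t) (hθn t ht) (hθeig' t ht) (hρδ t ht)
  have hnear : ∀ t ∈ Icc (-c) c, ∀ (β : ℝ) (w : K), ‖w‖ = 1 → A t w = β • w →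
      |β - ρ t| < S.g r / 2 → 1/2 ≤ |⟪w, θ t⟫| := by
    intro t ht β w hw1 hw2 hβ
    exact inner_lb θr w (θ t) hθr1 hw1 (hθn t ht)
      (hQbound t ht β w hw1 hw2 (hloc t ht β w hw1 hw2 hβ)) (hQθ t ht)
  have hθθ : ∀ t ∈ Icc (-c) c, ⟪θ t, θ t⟫ = 1 := by
    intro t ht
    rw [real_inner_self_eq_norm_sq, hθn t ht]; norm_num
  have hspanA : ∀ t ∈ Icc (-c) c, ∀ (β : ℝ) (w : K), A t w = β • w →
      |β - ρ t| < S.g r / 2 → w = ⟪θ t, w⟫ • θ t := by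
    intro t ht β w hw2 hβ
    rcases eq_or_ne w 0 with rfl | hw0
    · simp
    have hβρ : β = ρ t := by
      by_contra hne
      have horth : ⟪w, θ t⟫ = 0 := by
        have e1 : ⟪A t w, θ t⟫ = ⟪w, A t (θ t)⟫ := hAsym t w (θ t)
        rw [hw2, hθeig' t ht, real_inner_smul_left, real_inner_smul_right] at e1
        have e2 : (β - ρ t) * ⟪w, θ t⟫ = 0 := by linarith [e1]
        exact (mul_eq_zero.1 e2).resolve_left (sub_ne_zero.2 hne)
      have hu : ‖(‖w‖⁻¹ • w)‖ = 1 := norm_smul_inv_norm hw0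
      have heig : A t (‖w‖⁻¹ • w) = β • (‖w‖⁻¹ • w) := by
        rw [_root_.map_smul, hw2, smul_comm]
      have h12 := hnear t ht β _ hu heig hβ
      rw [real_inner_smul_left, horth, mul_zero] at h12
      norm_num at h12
    have hw2' : A t w = ρ t • w := by rw [← hβρ]; exact hw2
    set z := w - ⟪θ t, w⟫ • θ t with hz
    have hzeig : A t z = ρ t • z := by
      rw [hz, map_sub, _root_.map_smul, hw2', hθeig' t ht]
      module
    rcases eq_or_ne z 0 with hz0 | hz0
    · have : w - ⟪θ t, w⟫ • θ t = 0 := by rw [← hz]; exact hz0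
      exact sub_eq_zero.1 this
    · exfalso
      have hzo : ⟪z, θ t⟫ = 0 := by
        rw [hz, real_inner_comm (θ t) (w - ⟪θ t, w⟫ • θ t)]
        rw [inner_sub_right, real_inner_smul_right, hθθ t ht]; ring
      have hu : ‖(‖z‖⁻¹ • z)‖ = 1 := norm_smul_inv_norm hz0
      have heig : A t (‖z‖⁻¹ • z) = ρ t • (‖z‖⁻¹ • z) := by
        rw [_root_.map_smul, hzeig, smul_comm]
      have h12 := hnear t ht (ρ t) _ hu heig (by simpa using half_pos hg0)
      rw [real_inner_smul_left, hzo, mul_zero] at h12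
      norm_num at h12
  have hresA : ∀ t ∈ Icc (-c) c, ∀ x : K, ⟪θ t, x⟫ = 0 →
      S.g r / 2 * ‖x‖ ≤ ‖A t x - ρ t • x‖ := by
    intro t ht x hx
    refine resolvent_lb (A t) (hAsym t) (ρ t) _ (by linarith) x ?_
    intro β w hw hβ
    rw [hspanA t ht β w hw hβ, real_inner_smul_left, hx, mul_zero]
  have hpos : ∀ t ∈ Icc (-c) c, ∀ s ∈ Icc (-c) c, (1:ℝ)/2 ≤ ⟪θ s, θ t⟫ := by
    intro t ht s hs
    have h1 := inner_lb θr (θ s) (θ t) hθr1 (hθn s hs) (hθn t ht) (hQθ s hs) (hQθ t ht)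
    have h2 := halign s hs t ht
    rwa [abs_of_nonneg h2] at h1
  -- quantitative part
  set η := ‖Hop‖ / Real.sqrt (n:ℝ) with hη
  have hη0 : 0 ≤ η := by rw [hη]; positivity
  have hgg : (0:ℝ) < S.g r^2 := by positivity
  have habsq : ∀ x : ℝ, |x| * |x| = x^2 := fun x => by rw [← abs_mul, abs_mul_self]; ring
  have hHCS : ∀ x y : K, |⟪Hop x, y⟫| ≤ ‖Hop‖ * ‖x‖ * ‖y‖ := by
    intro x y
    calc |⟪Hop x, y⟫| ≤ ‖Hop x‖ * ‖y‖ := abs_real_inner_le_norm _ _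
    _ ≤ ‖Hop‖ * ‖x‖ * ‖y‖ := mul_le_mul_of_nonneg_right (hHb x) (norm_nonneg y)
  have hθθn : ∀ t ∈ Icc (-c) c, ∀ s ∈ Icc (-c) c, ‖θ s - θ t‖ ≤ 2 := by
    intro t ht s hs
    calc ‖θ s - θ t‖ ≤ ‖θ s‖ + ‖θ t‖ := norm_sub_le _ _
    _ = 2 := by rw [hθn s hs, hθn t ht]; norm_num
  have hns : ∀ t ∈ Icc (-c) c, ∀ s ∈ Icc (-c) c,
      ‖θ s - θ t‖^2 = 2 - 2*⟪θ s, θ t⟫ := by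
    intro t ht s hs
    have h1 := norm_sub_sq_real (θ s) (θ t)
    rw [hθn s hs, hθn t ht] at h1
    linarith
  have hAts : ∀ t ∈ Icc (-c) c, ∀ s ∈ Icc (-c) c,
      A t (θ s) = ρ s • θ s + ((t - s)/Real.sqrt n) • Hop (θ s) := by
    intro t ht s hs
    have h1 := hAsub t s (θ s)
    have h2 := hθeig' s hs
    calc A t (θ s) = A s (θ s) + (A t (θ s) - A s (θ s)) := by abel
    _ = ρ s • θ s + ((t - s)/Real.sqrt n) • Hop (θ s) := by rw [h1, h2]
  have hkey : ∀ t ∈ Icc (-c) c, ∀ s ∈ Icc (-c) c,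
      (ρ s - ρ t) * ⟪θ s, θ t⟫ = ((s - t)/Real.sqrt n) * ⟪Hop (θ s), θ t⟫ := by
    intro t ht s hs
    have e1 : ⟪A t (θ s), θ t⟫ = ρ t * ⟪θ s, θ t⟫ := by
      rw [hAsym t (θ s) (θ t), hθeig' t ht, real_inner_smul_right]
    rw [hAts t ht s hs, inner_add_left, real_inner_smul_left, real_inner_smul_left] at e1
    have e2 : (s - t)/Real.sqrt n = -((t - s)/Real.sqrt n) := by ring
    rw [e2]
    linear_combination e1
  have hρL : ∀ t ∈ Icc (-c) c, ∀ s ∈ Icc (-c) c, |ρ s - ρ t| ≤ 2 * η * |s - t| := by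
    intro t ht s hs
    have hq := hpos t ht s hs
    have hk := hkey t ht s hs
    have hH1 : |⟪Hop (θ s), θ t⟫| ≤ ‖Hop‖ := by
      have := hHCS (θ s) (θ t)
      rw [hθn s hs, hθn t ht] at this
      linarith
    have habsq : |(ρ s - ρ t) * ⟪θ s, θ t⟫| = |ρ s - ρ t| * ⟪θ s, θ t⟫ := by
      rw [abs_mul, abs_of_nonneg (by linarith : (0:ℝ) ≤ ⟪θ s, θ t⟫)]
    have h2 : |ρ s - ρ t| * (1/2) ≤ |ρ s - ρ t| * ⟪θ s, θ t⟫ :=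
      mul_le_mul_of_nonneg_left hq (abs_nonneg _)
    have h3 : |ρ s - ρ t| * ⟪θ s, θ t⟫ ≤ |s - t| / Real.sqrt n * ‖Hop‖ := by
      rw [← habsq, hk, abs_mul, habsdiv]
      exact mul_le_mul_of_nonneg_left hH1 (by positivity)
    have h4 : |s - t| / Real.sqrt n * ‖Hop‖ = η * |s - t| := by rw [hη]; ring
    rw [h4] at h3
    linarith
  have hθL : ∀ t ∈ Icc (-c) c, ∀ s ∈ Icc (-c) c,
      S.g r * ‖θ s - θ t‖ ≤ 12 * η * |s - t| := by
    intro t ht s hs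
    set q := ⟪θ t, θ s⟫ with hqd
    set w := θ s - q • θ t with hwd
    have hwo : ⟪θ t, w⟫ = 0 := by
      rw [hwd, inner_sub_right, real_inner_smul_right, hθθ t ht, hqd]; ring
    have hweq : A t w - ρ t • w = (ρ s - ρ t) • θ s + ((t - s)/Real.sqrt n) • Hop (θ s) := by
      have e1 : A t w = A t (θ s) - q • A t (θ t) := by rw [hwd, map_sub, _root_.map_smul]
      rw [hwd, e1, hAts t ht s hs, hθeig' t ht]
      module
    have n1 : ‖(ρ s - ρ t) • θ s‖ = |ρ s - ρ t| := by
      rw [norm_smul, Real.norm_eq_abs, hθn s hs, mul_one]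
    have n2 : ‖((t - s)/Real.sqrt n) • Hop (θ s)‖ ≤ η * |s - t| := by
      rw [norm_smul, Real.norm_eq_abs, habsdiv]
      have e1 : ‖Hop (θ s)‖ ≤ ‖Hop‖ := by
        have := hHb (θ s); rw [hθn s hs, mul_one] at this; exact this
      calc |t - s|/Real.sqrt n * ‖Hop (θ s)‖ ≤ |t - s|/Real.sqrt n * ‖Hop‖ :=
            mul_le_mul_of_nonneg_left e1 (by positivity)
      _ = η * |s - t| := by rw [hη, abs_sub_comm t s]; ring
    have hbound : ‖A t w - ρ t • w‖ ≤ 3 * η * |s - t| := by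
      have := norm_add_le ((ρ s - ρ t) • θ s) (((t - s)/Real.sqrt n) • Hop (θ s))
      rw [← hweq] at this
      have hL := hρL t ht s hs
      have h0 : 0 ≤ η * |s - t| := by positivity
      calc ‖A t w - ρ t • w‖ ≤ ‖(ρ s - ρ t) • θ s‖ + ‖((t - s)/Real.sqrt n) • Hop (θ s)‖ := this
      _ ≤ 2 * η * |s - t| + η * |s - t| := by rw [n1]; exact add_le_add hL n2
      _ = 3 * η * |s - t| := by ring
    have hwb : S.g r / 2 * ‖w‖ ≤ 3 * η * |s - t| := le_trans (hresA t ht w hwo) hbound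
    have hpy : (1:ℝ) = q^2 + ‖w‖^2 := by
      have hdec : θ s = q • θ t + w := by rw [hwd]; abel
      have h1 := norm_add_sq_real (q • θ t) w
      rw [← hdec, hθn s hs] at h1
      rw [real_inner_smul_left, hwo, norm_smul, Real.norm_eq_abs, hθn t ht] at h1
      nlinarith [sq_abs q, h1]
    have hq12 : 1/2 ≤ q := by
      have h1 := hpos t ht s hs
      have h2 : ⟪θ s, θ t⟫ = q := by rw [hqd]; exact real_inner_comm (θ t) (θ s)
      linarith [h2 ▸ h1]
    have hnsq : ‖θ s - θ t‖^2 = 2 - 2*q := by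
      have h1 := hns t ht s hs
      have h2 : ⟪θ s, θ t⟫ = q := by rw [hqd]; exact real_inner_comm (θ t) (θ s)
      rw [h2] at h1
      exact h1
    have h1q : 1 - q ≤ ‖w‖^2 := by nlinarith [hpy, hq12]
    have hfin : ‖θ s - θ t‖ ≤ 2 * ‖w‖ := by
      nlinarith [hnsq, h1q, norm_nonneg (θ s - θ t), norm_nonneg w,
        sq_nonneg (‖θ s - θ t‖ - 2*‖w‖), sq_nonneg (‖θ s - θ t‖ + 2*‖w‖)]
    calc S.g r * ‖θ s - θ t‖ ≤ S.g r * (2*‖w‖) := mul_le_mul_of_nonneg_left hfin hg0.le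
    _ = 4 * (S.g r/2 * ‖w‖) := by ring
    _ ≤ 4 * (3*η*|s - t|) := by linarith [hwb]
    _ = 12*η*|s - t| := by ring
  have hR : ∀ t ∈ Icc (-c) c, ∀ s ∈ Icc (-c) c,
      S.g r * |ρ s - ρ t - ((s - t)/Real.sqrt n) * ⟪θ t, Hop (θ t)⟫| ≤
        48 * η^2 * (s - t)^2 := by
    intro t ht s hs
    have hq12 := hpos t ht s hs
    have hk := hkey t ht s hs
    set q := ⟪θ s, θ t⟫ with hqd
    set R := ρ s - ρ t - ((s - t)/Real.sqrt n) * ⟪θ t, Hop (θ t)⟫ with hRd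
    have hRq : R * q = ((s - t)/Real.sqrt n) *
        (⟪Hop (θ s - θ t), θ t⟫ + ⟪θ t, Hop (θ t)⟫ * (1 - q)) := by
      have hsplit : ⟪Hop (θ s), θ t⟫ = ⟪Hop (θ s - θ t), θ t⟫ + ⟪Hop (θ t), θ t⟫ := by
        rw [_root_.map_sub, inner_sub_left]; ring
      have hcomm : ⟪Hop (θ t), θ t⟫ = ⟪θ t, Hop (θ t)⟫ := hHsym (θ t) (θ t)
      rw [hRd]
      linear_combination hk + ((s - t)/Real.sqrt n) * hsplit + ((s - t)/Real.sqrt n) * hcomm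
    have hnsq := hns t ht s hs
    have hq1 : q ≤ 1 := by nlinarith [hnsq, sq_nonneg (‖θ s - θ t‖)]
    have hX : |⟪Hop (θ s - θ t), θ t⟫| ≤ ‖Hop‖ * ‖θ s - θ t‖ := by
      have := hHCS (θ s - θ t) (θ t)
      rw [hθn t ht, mul_one] at this
      exact this
    have hh0 : |⟪θ t, Hop (θ t)⟫| ≤ ‖Hop‖ := by
      have h1 : |⟪Hop (θ t), θ t⟫| ≤ ‖Hop‖ := by
        have := hHCS (θ t) (θ t); rw [hθn t ht] at this; simpa using this
      rw [← hHsym (θ t) (θ t)]; exact h1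
    have hM : |⟪Hop (θ s - θ t), θ t⟫ + ⟪θ t, Hop (θ t)⟫ * (1 - q)| ≤
        ‖Hop‖ * ‖θ s - θ t‖ + ‖Hop‖ * (1 - q) := by
      calc |⟪Hop (θ s - θ t), θ t⟫ + ⟪θ t, Hop (θ t)⟫ * (1 - q)| ≤
            |⟪Hop (θ s - θ t), θ t⟫| + |⟪θ t, Hop (θ t)⟫ * (1 - q)| := abs_add_le _ _
      _ ≤ ‖Hop‖ * ‖θ s - θ t‖ + ‖Hop‖ * (1 - q) := by
          rw [abs_mul, abs_of_nonneg (by linarith : (0:ℝ) ≤ 1 - q)]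
          exact add_le_add hX (mul_le_mul_of_nonneg_right hh0 (by linarith))
    have hgθ := hθL t ht s hs
    have hθ2 := hθθn t ht s hs
    have e1 : S.g r * (1 - q) ≤ 12 * η * |s - t| := by
      have h1q : 1 - q = ‖θ s - θ t‖^2/2 := by linarith [hnsq]
      rw [h1q]
      nlinarith [hgθ, hθ2, norm_nonneg (θ s - θ t), hg0.le,
        mul_nonneg hη0 (abs_nonneg (s - t))]
    have hgM : S.g r * (‖Hop‖ * ‖θ s - θ t‖ + ‖Hop‖ * (1 - q)) ≤ 24 * ‖Hop‖ * η * |s - t| := by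
      have m1 := mul_le_mul_of_nonneg_left hgθ (norm_nonneg Hop)
      have m2 := mul_le_mul_of_nonneg_left e1 (norm_nonneg Hop)
      nlinarith [m1, m2]
    have hq0 : (0:ℝ) ≤ q := by linarith
    have hcore : |R| ≤ 2*(|s - t|/Real.sqrt n) *
        (‖Hop‖ * ‖θ s - θ t‖ + ‖Hop‖ * (1 - q)) := by
      have b0 : |R| * q = |R * q| := by rw [abs_mul, abs_of_nonneg hq0]
      have b1 : |R| * q ≤ (|s - t|/Real.sqrt n) *
          (‖Hop‖ * ‖θ s - θ t‖ + ‖Hop‖ * (1 - q)) := by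
        rw [b0, hRq, abs_mul, habsdiv]
        exact mul_le_mul_of_nonneg_left hM (by positivity)
      have b2 : |R| * (1/2) ≤ |R| * q := mul_le_mul_of_nonneg_left hq12 (abs_nonneg R)
      linarith
    calc S.g r * |R| ≤ S.g r * (2*(|s - t|/Real.sqrt n) *
          (‖Hop‖ * ‖θ s - θ t‖ + ‖Hop‖ * (1 - q))) := mul_le_mul_of_nonneg_left hcore hg0.le
    _ = 2*(|s - t|/Real.sqrt n) * (S.g r * (‖Hop‖ * ‖θ s - θ t‖ + ‖Hop‖ * (1 - q))) := by ring
    _ ≤ 2*(|s - t|/Real.sqrt n) * (24 * ‖Hop‖ * η * |s - t|) :=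
        mul_le_mul_of_nonneg_left hgM (by positivity)
    _ = 48 * η^2 * (|s - t| * |s - t|) := by rw [hη]; ring
    _ = 48 * η^2 * (s - t)^2 := by rw [habsq]
  -- v facts
  have hvort : ∀ t ∈ Icc (-c) c, ⟪θ t, v t⟫ = 0 := by
    intro t ht
    rw [real_inner_comm (v t) (θ t)]
    exact (hvspec t ht).1
  set W : ℝ → K := fun τ => Hop (θ τ) - ⟪θ τ, Hop (θ τ)⟫ • θ τ with hWd
  have hveq' : ∀ t ∈ Icc (-c) c, A t (v t) - ρ t • v t = -(W t) := by
    intro t ht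
    have h := (hvspec t ht).2
    have hw : W t = Hop (θ t) - ⟪θ t, Hop (θ t)⟫ • θ t := by rw [hWd]
    rw [hw, ← h]; abel
  have hWb : ∀ t ∈ Icc (-c) c, ‖W t‖ ≤ 2 * ‖Hop‖ := by
    intro t ht
    have hw : W t = Hop (θ t) - ⟪θ t, Hop (θ t)⟫ • θ t := by rw [hWd]
    have hh0 : |⟪θ t, Hop (θ t)⟫| ≤ ‖Hop‖ := by
      rw [← hHsym (θ t) (θ t)]
      have := hHCS (θ t) (θ t); rw [hθn t ht] at this; simpa using this
    have e1 : ‖Hop (θ t)‖ ≤ ‖Hop‖ := by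
      have := hHb (θ t); rw [hθn t ht, mul_one] at this; exact this
    calc ‖W t‖ ≤ ‖Hop (θ t)‖ + ‖⟪θ t, Hop (θ t)⟫ • θ t‖ := by rw [hw]; exact norm_sub_le _ _
    _ ≤ ‖Hop‖ + ‖Hop‖ := by
        apply add_le_add e1
        rw [norm_smul, Real.norm_eq_abs, hθn t ht, mul_one]
        exact hh0
    _ = 2 * ‖Hop‖ := by ring
  have hvb : ∀ t ∈ Icc (-c) c, S.g r * ‖v t‖ ≤ 4 * ‖Hop‖ := by
    intro t ht
    have h1 := hresA t ht (v t) (hvort t ht)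
    have h2 : ‖A t (v t) - ρ t • v t‖ ≤ 2*‖Hop‖ := by
      rw [hveq' t ht, norm_neg]; exact hWb t ht
    linarith
  have hWdiff : ∀ t ∈ Icc (-c) c, ∀ s ∈ Icc (-c) c,
      ‖W t - W s‖ ≤ 4 * ‖Hop‖ * ‖θ t - θ s‖ := by
    intro t ht s hs
    have hwt : W t = Hop (θ t) - ⟪θ t, Hop (θ t)⟫ • θ t := by rw [hWd]
    have hws : W s = Hop (θ s) - ⟪θ s, Hop (θ s)⟫ • θ s := by rw [hWd]
    have e1 : W t - W s = Hop (θ t - θ s) -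
        ((⟪θ t, Hop (θ t)⟫ - ⟪θ s, Hop (θ s)⟫) • θ t + ⟪θ s, Hop (θ s)⟫ • (θ t - θ s)) := by
      rw [hwt, hws, _root_.map_sub]
      module
    have hh0d : |⟪θ t, Hop (θ t)⟫ - ⟪θ s, Hop (θ s)⟫| ≤ 2*‖Hop‖*‖θ t - θ s‖ := by
      have e2 : ⟪θ t, Hop (θ t)⟫ - ⟪θ s, Hop (θ s)⟫ =
          ⟪θ t - θ s, Hop (θ t)⟫ + ⟪θ s, Hop (θ t - θ s)⟫ := by
        rw [_root_.map_sub, inner_sub_left, inner_sub_right]; ring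
      rw [e2]
      have b1 : |⟪θ t - θ s, Hop (θ t)⟫| ≤ ‖Hop‖ * ‖θ t - θ s‖ := by
        calc |⟪θ t - θ s, Hop (θ t)⟫| ≤ ‖θ t - θ s‖ * ‖Hop (θ t)‖ := abs_real_inner_le_norm _ _
        _ ≤ ‖θ t - θ s‖ * ‖Hop‖ := by
            apply mul_le_mul_of_nonneg_left _ (norm_nonneg _)
            have := hHb (θ t); rw [hθn t ht, mul_one] at this; exact this
        _ = ‖Hop‖ * ‖θ t - θ s‖ := by ring
      have b2 : |⟪θ s, Hop (θ t - θ s)⟫| ≤ ‖Hop‖ * ‖θ t - θ s‖ := by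
        calc |⟪θ s, Hop (θ t - θ s)⟫| ≤ ‖θ s‖ * ‖Hop (θ t - θ s)‖ := abs_real_inner_le_norm _ _
        _ ≤ ‖Hop‖ * ‖θ t - θ s‖ := by
            rw [hθn s hs, one_mul]
            exact hHb (θ t - θ s)
      calc |⟪θ t - θ s, Hop (θ t)⟫ + ⟪θ s, Hop (θ t - θ s)⟫| ≤
            |⟪θ t - θ s, Hop (θ t)⟫| + |⟪θ s, Hop (θ t - θ s)⟫| := abs_add_le _ _
      _ ≤ 2*‖Hop‖*‖θ t - θ s‖ := by linarith
    have hh0s : |⟪θ s, Hop (θ s)⟫| ≤ ‖Hop‖ := by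
      rw [← hHsym (θ s) (θ s)]
      have := hHCS (θ s) (θ s); rw [hθn s hs] at this; simpa using this
    calc ‖W t - W s‖ ≤ ‖Hop (θ t - θ s)‖ +
          ‖(⟪θ t, Hop (θ t)⟫ - ⟪θ s, Hop (θ s)⟫) • θ t + ⟪θ s, Hop (θ s)⟫ • (θ t - θ s)‖ := by
              rw [e1]; exact norm_sub_le _ _
    _ ≤ ‖Hop‖ * ‖θ t - θ s‖ + (2*‖Hop‖*‖θ t - θ s‖ * 1 + ‖Hop‖ * ‖θ t - θ s‖) := by
        apply add_le_add (hHb _)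
        calc ‖(⟪θ t, Hop (θ t)⟫ - ⟪θ s, Hop (θ s)⟫) • θ t + ⟪θ s, Hop (θ s)⟫ • (θ t - θ s)‖ ≤
              ‖(⟪θ t, Hop (θ t)⟫ - ⟪θ s, Hop (θ s)⟫) • θ t‖ +
                ‖⟪θ s, Hop (θ s)⟫ • (θ t - θ s)‖ := norm_add_le _ _
        _ ≤ 2*‖Hop‖*‖θ t - θ s‖ * 1 + ‖Hop‖ * ‖θ t - θ s‖ := by
            apply add_le_add
            · rw [norm_smul, Real.norm_eq_abs, hθn t ht]
              nlinarith [hh0d]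
            · rw [norm_smul, Real.norm_eq_abs]
              exact mul_le_mul_of_nonneg_right hh0s (norm_nonneg _)
    _ = 4 * ‖Hop‖ * ‖θ t - θ s‖ := by ring
  -- the quadratic bound
  have hquad : ∀ t ∈ Icc (-c) c, ∀ s ∈ Icc (-c) c,
      S.g r^2 * ‖θ s - θ t - ((s - t)/Real.sqrt n) • v t‖ ≤ 400 * η^2 * (s - t)^2 := by
    intro t ht s hs
    set d := θ s - θ t - ((s - t)/Real.sqrt n) • v t with hdd
    set R := ρ s - ρ t - ((s - t)/Real.sqrt n) * ⟪θ t, Hop (θ t)⟫ with hRd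
    have habs2 : |s - t| * |s - t| = (s - t)^2 := habsq (s - t)
    have hAd : A t d - ρ t • d = (ρ s - ρ t) • (θ s - θ t) + R • θ t -
        ((s - t)/Real.sqrt n) • Hop (θ s - θ t) := by
      have e1 : A t d = A t (θ s) - A t (θ t) - ((s - t)/Real.sqrt n) • A t (v t) := by
        rw [hdd, map_sub, map_sub, _root_.map_smul]
      have e2 : A t (v t) = ρ t • v t - (Hop (θ t) - ⟪θ t, Hop (θ t)⟫ • θ t) := by
        have h := (hvspec t ht).2
        rw [← h]; abel
      rw [hdd, e1, hAts t ht s hs, hθeig' t ht, e2, hRd, _root_.map_sub Hop (θ s) (θ t)]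
      module
    have hAdb : ‖A t d - ρ t • d‖ ≤ |ρ s - ρ t| * ‖θ s - θ t‖ + |R| +
        η * |s - t| * ‖θ s - θ t‖ := by
      rw [hAd]
      have n1 : ‖(ρ s - ρ t) • (θ s - θ t)‖ = |ρ s - ρ t| * ‖θ s - θ t‖ := by
        rw [norm_smul, Real.norm_eq_abs]
      have n2 : ‖R • θ t‖ = |R| := by
        rw [norm_smul, Real.norm_eq_abs, hθn t ht, mul_one]
      have n3 : ‖((s - t)/Real.sqrt n) • Hop (θ s - θ t)‖ ≤ η * |s - t| * ‖θ s - θ t‖ := by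
        rw [norm_smul, Real.norm_eq_abs, habsdiv]
        calc |s - t|/Real.sqrt n * ‖Hop (θ s - θ t)‖ ≤
              |s - t|/Real.sqrt n * (‖Hop‖ * ‖θ s - θ t‖) :=
            mul_le_mul_of_nonneg_left (hHb _) (by positivity)
        _ = η * |s - t| * ‖θ s - θ t‖ := by rw [hη]; ring
      calc ‖(ρ s - ρ t) • (θ s - θ t) + R • θ t - ((s - t)/Real.sqrt n) • Hop (θ s - θ t)‖ ≤
            ‖(ρ s - ρ t) • (θ s - θ t) + R • θ t‖ +
              ‖((s - t)/Real.sqrt n) • Hop (θ s - θ t)‖ := norm_sub_le _ _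
      _ ≤ (‖(ρ s - ρ t) • (θ s - θ t)‖ + ‖R • θ t‖) +
            ‖((s - t)/Real.sqrt n) • Hop (θ s - θ t)‖ := by
              exact add_le_add (norm_add_le _ _) le_rfl
      _ ≤ |ρ s - ρ t| * ‖θ s - θ t‖ + |R| + η * |s - t| * ‖θ s - θ t‖ := by
          rw [n1, n2]; linarith [n3]
    have hgAd : S.g r * ‖A t d - ρ t • d‖ ≤ 84 * η^2 * (s - t)^2 := by
      have m0 := mul_le_mul_of_nonneg_left hAdb hg0.le
      have m1 : |ρ s - ρ t| * (S.g r * ‖θ s - θ t‖) ≤ (2*η*|s - t|) * (12*η*|s - t|) :=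
        mul_le_mul (hρL t ht s hs) (hθL t ht s hs)
          (mul_nonneg hg0.le (norm_nonneg _)) (by positivity)
      have m2 := hR t ht s hs
      rw [← hRd] at m2
      have m3 : η * |s - t| * (S.g r * ‖θ s - θ t‖) ≤ (η*|s - t|) * (12*η*|s - t|) :=
        mul_le_mul_of_nonneg_left (hθL t ht s hs) (by positivity)
      have habs2' : η^2 * (|s - t| * |s - t|) = η^2 * ((s - t)^2) := by rw [habs2]
      linarith [m0, m1, m2, m3, habs2']
    have hdinner : ⟪θ t, d⟫ = ⟪θ t, θ s⟫ - 1 := by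
      rw [hdd, inner_sub_right, inner_sub_right, real_inner_smul_right, hθθ t ht, hvort t ht]
      ring
    have hcommts : ⟪θ t, θ s⟫ = ⟪θ s, θ t⟫ := real_inner_comm (θ s) (θ t)
    have hdi : |⟪θ t, d⟫| ≤ ‖θ s - θ t‖^2 / 2 := by
      rw [hdinner, hcommts]
      have h1 := hns t ht s hs
      have h3 := hpos t ht s hs
      rw [abs_of_nonpos (by nlinarith [sq_nonneg (‖θ s - θ t‖)] : ⟪θ s, θ t⟫ - 1 ≤ 0)]
      linarith
    set d2 := d - ⟪θ t, d⟫ • θ t with hd2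
    have hd2o : ⟪θ t, d2⟫ = 0 := by
      rw [hd2, inner_sub_right, real_inner_smul_right, hθθ t ht]; ring
    have hd2e : A t d2 - ρ t • d2 = A t d - ρ t • d := by
      rw [hd2, map_sub, _root_.map_smul, hθeig' t ht]; module
    have hd2b : S.g r / 2 * ‖d2‖ ≤ ‖A t d - ρ t • d‖ := by
      rw [← hd2e]; exact hresA t ht d2 hd2o
    have hdsplit : ‖d‖ ≤ |⟪θ t, d⟫| + ‖d2‖ := by
      calc ‖d‖ = ‖⟪θ t, d⟫ • θ t + d2‖ := by rw [hd2]; congr 1; abel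
      _ ≤ ‖⟪θ t, d⟫ • θ t‖ + ‖d2‖ := norm_add_le _ _
      _ = |⟪θ t, d⟫| + ‖d2‖ := by rw [norm_smul, Real.norm_eq_abs, hθn t ht, mul_one]
    have hsqθ : (S.g r * ‖θ s - θ t‖)^2 ≤ (12*η*|s - t|)^2 :=
      pow_le_pow_left₀ (mul_nonneg hg0.le (norm_nonneg _)) (hθL t ht s hs) 2
    calc S.g r^2 * ‖d‖ ≤ S.g r^2 * (|⟪θ t, d⟫| + ‖d2‖) :=
          mul_le_mul_of_nonneg_left hdsplit (by positivity)
    _ = S.g r^2 * |⟪θ t, d⟫| + S.g r * (2 * (S.g r/2 * ‖d2‖)) := by ring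
    _ ≤ S.g r^2 * (‖θ s - θ t‖^2/2) + S.g r * (2*‖A t d - ρ t • d‖) := by
        have t1 := mul_le_mul_of_nonneg_left hdi (le_of_lt hgg)
        have t2 : S.g r * (2 * (S.g r/2 * ‖d2‖)) ≤ S.g r * (2*‖A t d - ρ t • d‖) := by
          apply mul_le_mul_of_nonneg_left _ hg0.le
          linarith [hd2b]
        linarith
    _ ≤ (12*η*|s - t|)^2/2 + 2*(84*η^2*(s - t)^2) := by
        have t3 : S.g r^2 * (‖θ s - θ t‖^2/2) = (S.g r * ‖θ s - θ t‖)^2/2 := by ring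
        rw [t3]
        have t4 := hgAd
        nlinarith [hsqθ, t4]
    _ ≤ 400*η^2*(s - t)^2 := by
        nlinarith [sq_abs (s - t), mul_nonneg (sq_nonneg η) (sq_nonneg (s - t))]
  have hvL : ∀ t ∈ Icc (-c) c, ∀ s ∈ Icc (-c) c,
      S.g r^2 * ‖v t - v s‖ ≤ 200 * η * ‖Hop‖ * |t - s| := by
    intro t ht s hs
    have hE : A t (v t - v s) - ρ t • (v t - v s) =
        -(W t - W s) - ((t - s)/Real.sqrt n) • Hop (v s) - (ρ s - ρ t) • v s := by
      have e1 := hveq' t ht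
      have e2 := hveq' s hs
      have e3 := hAsub t s (v s)
      have e4 : A t (v t - v s) - ρ t • (v t - v s) =
          (A t (v t) - ρ t • v t) - (A t (v s) - A s (v s)) - (A s (v s) - ρ s • v s) -
            (ρ s - ρ t) • v s := by
        rw [map_sub]; module
      rw [e4, e1, e2, e3]
      module
    have hEb : ‖A t (v t - v s) - ρ t • (v t - v s)‖ ≤
        ‖W t - W s‖ + η * |t - s| * ‖v s‖ + |ρ s - ρ t| * ‖v s‖ := by
      rw [hE]
      have n1 : ‖((t - s)/Real.sqrt n) • Hop (v s)‖ ≤ η * |t - s| * ‖v s‖ := by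
        rw [norm_smul, Real.norm_eq_abs, habsdiv]
        calc |t - s|/Real.sqrt n * ‖Hop (v s)‖ ≤ |t - s|/Real.sqrt n * (‖Hop‖ * ‖v s‖) :=
              mul_le_mul_of_nonneg_left (hHb _) (by positivity)
        _ = η * |t - s| * ‖v s‖ := by rw [hη]; ring
      have n2 : ‖(ρ s - ρ t) • v s‖ = |ρ s - ρ t| * ‖v s‖ := by
        rw [norm_smul, Real.norm_eq_abs]
      calc ‖-(W t - W s) - ((t - s)/Real.sqrt n) • Hop (v s) - (ρ s - ρ t) • v s‖ ≤
            ‖-(W t - W s) - ((t - s)/Real.sqrt n) • Hop (v s)‖ + ‖(ρ s - ρ t) • v s‖ :=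
          norm_sub_le _ _
      _ ≤ (‖-(W t - W s)‖ + ‖((t - s)/Real.sqrt n) • Hop (v s)‖) + ‖(ρ s - ρ t) • v s‖ :=
          add_le_add (norm_sub_le _ _) le_rfl
      _ ≤ ‖W t - W s‖ + η * |t - s| * ‖v s‖ + |ρ s - ρ t| * ‖v s‖ := by
          rw [norm_neg, n2]; linarith [n1]
    have hgE : S.g r * ‖A t (v t - v s) - ρ t • (v t - v s)‖ ≤ 60 * η * ‖Hop‖ * |t - s| := by
      have m0 := mul_le_mul_of_nonneg_left hEb hg0.le
      have m1 : S.g r * ‖W t - W s‖ ≤ 4 * ‖Hop‖ * (12 * η * |t - s|) := by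
        calc S.g r * ‖W t - W s‖ ≤ S.g r * (4 * ‖Hop‖ * ‖θ t - θ s‖) :=
              mul_le_mul_of_nonneg_left (hWdiff t ht s hs) hg0.le
        _ = 4 * ‖Hop‖ * (S.g r * ‖θ t - θ s‖) := by ring
        _ ≤ 4 * ‖Hop‖ * (12 * η * |t - s|) :=
              mul_le_mul_of_nonneg_left (hθL s hs t ht) (by positivity)
      have m2 : η * |t - s| * (S.g r * ‖v s‖) ≤ η * |t - s| * (4 * ‖Hop‖) :=
        mul_le_mul_of_nonneg_left (hvb s hs) (by positivity)
      have m3 : |ρ s - ρ t| * (S.g r * ‖v s‖) ≤ (2*η*|s - t|) * (4*‖Hop‖) :=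
        mul_le_mul (hρL t ht s hs) (hvb s hs) (mul_nonneg hg0.le (norm_nonneg _))
          (by positivity)
      have habsst : |s - t| = |t - s| := abs_sub_comm s t
      rw [habsst] at m3
      linarith [m0, m1, m2, m3]
    have hio : ⟪θ t, v t - v s⟫ = -⟪θ t - θ s, v s⟫ := by
      rw [inner_sub_right, hvort t ht, inner_sub_left]
      have := hvort s hs
      linarith
    have hii : S.g r^2 * |⟪θ t, v t - v s⟫| ≤ 12 * η * |t - s| * (4 * ‖Hop‖) := by
      rw [hio, abs_neg]
      have b1 : |⟪θ t - θ s, v s⟫| ≤ ‖θ t - θ s‖ * ‖v s‖ := abs_real_inner_le_norm _ _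
      calc S.g r^2 * |⟪θ t - θ s, v s⟫| ≤ S.g r^2 * (‖θ t - θ s‖ * ‖v s‖) :=
            mul_le_mul_of_nonneg_left b1 (le_of_lt hgg)
      _ = (S.g r * ‖θ t - θ s‖) * (S.g r * ‖v s‖) := by ring
      _ ≤ (12 * η * |t - s|) * (4 * ‖Hop‖) :=
            mul_le_mul (hθL s hs t ht) (hvb s hs) (mul_nonneg hg0.le (norm_nonneg _))
              (by positivity)
      _ = 12 * η * |t - s| * (4 * ‖Hop‖) := by ring
    set d2 := (v t - v s) - ⟪θ t, v t - v s⟫ • θ t with hd2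
    have hd2o : ⟪θ t, d2⟫ = 0 := by
      rw [hd2, inner_sub_right, real_inner_smul_right, hθθ t ht]; ring
    have hd2e : A t d2 - ρ t • d2 = A t (v t - v s) - ρ t • (v t - v s) := by
      rw [hd2, map_sub, _root_.map_smul, hθeig' t ht]; module
    have hd2b : S.g r / 2 * ‖d2‖ ≤ ‖A t (v t - v s) - ρ t • (v t - v s)‖ := by
      rw [← hd2e]; exact hresA t ht d2 hd2o
    have hdsplit : ‖v t - v s‖ ≤ |⟪θ t, v t - v s⟫| + ‖d2‖ := by
      calc ‖v t - v s‖ = ‖⟪θ t, v t - v s⟫ • θ t + d2‖ := by rw [hd2]; congr 1; abel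
      _ ≤ ‖⟪θ t, v t - v s⟫ • θ t‖ + ‖d2‖ := norm_add_le _ _
      _ = |⟪θ t, v t - v s⟫| + ‖d2‖ := by
          rw [norm_smul, Real.norm_eq_abs, hθn t ht, mul_one]
    calc S.g r^2 * ‖v t - v s‖ ≤ S.g r^2 * (|⟪θ t, v t - v s⟫| + ‖d2‖) :=
          mul_le_mul_of_nonneg_left hdsplit (le_of_lt hgg)
    _ = S.g r^2 * |⟪θ t, v t - v s⟫| + S.g r * (2 * (S.g r/2 * ‖d2‖)) := by ring
    _ ≤ 12 * η * |t - s| * (4 * ‖Hop‖) +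
          S.g r * (2 * ‖A t (v t - v s) - ρ t • (v t - v s)‖) := by
        have t2 : S.g r * (2 * (S.g r/2 * ‖d2‖)) ≤
            S.g r * (2 * ‖A t (v t - v s) - ρ t • (v t - v s)‖) := by
          apply mul_le_mul_of_nonneg_left _ hg0.le
          linarith [hd2b]
        linarith [hii]
    _ ≤ 48 * η * ‖Hop‖ * |t - s| + 2 * (60 * η * ‖Hop‖ * |t - s|) := by
        linarith [hgE]
    _ ≤ 200 * η * ‖Hop‖ * |t - s| := by
        linarith [mul_nonneg (mul_nonneg hη0 (norm_nonneg Hop)) (abs_nonneg (t - s))]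
  refine ⟨?_, ?_, ?_⟩
  · intro t ht
    apply hasDeriv_of_quadratic (K := 400 * η^2 * ‖u‖ / S.g r^2)
    intro s hs
    show |⟪θ s, u⟫ - ⟪θ t, u⟫ - (s - t) * ((Real.sqrt n)⁻¹ * ⟪v t, u⟫)| ≤
      400 * η^2 * ‖u‖ / S.g r^2 * (s - t)^2
    have hq := hquad t ht s hs
    have he : ⟪θ s, u⟫ - ⟪θ t, u⟫ - (s - t) * ((Real.sqrt n)⁻¹ * ⟪v t, u⟫) =
        ⟪θ s - θ t - ((s - t)/Real.sqrt n) • v t, u⟫ := by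
      rw [inner_sub_left, inner_sub_left, real_inner_smul_left, div_eq_mul_inv]
      ring
    rw [he]
    have hCS : |⟪θ s - θ t - ((s - t)/Real.sqrt n) • v t, u⟫| ≤
        ‖θ s - θ t - ((s - t)/Real.sqrt n) • v t‖ * ‖u‖ := abs_real_inner_le_norm _ _
    have h2 := mul_le_mul_of_nonneg_right hq (norm_nonneg u)
    have h3 := mul_le_mul_of_nonneg_left hCS hgg.le
    rw [div_mul_eq_mul_div, le_div_iff₀ hgg]
    linarith [h2, h3]
  · apply continuousOn_of_lip (M := (Real.sqrt n)⁻¹ * (200 * η * ‖Hop‖ / S.g r^2) * ‖u‖)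
    intro t ht s hs
    show |(Real.sqrt n)⁻¹ * ⟪v t, u⟫ - (Real.sqrt n)⁻¹ * ⟪v s, u⟫| ≤
      (Real.sqrt n)⁻¹ * (200 * η * ‖Hop‖ / S.g r^2) * ‖u‖ * |t - s|
    have h1 := hvL t ht s hs
    have he : (Real.sqrt n)⁻¹ * ⟪v t, u⟫ - (Real.sqrt n)⁻¹ * ⟪v s, u⟫ =
        (Real.sqrt n)⁻¹ * ⟪v t - v s, u⟫ := by rw [inner_sub_left]; ring
    rw [he, abs_mul, abs_of_nonneg (inv_nonneg.2 (Real.sqrt_nonneg _))]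
    have hCS : |⟪v t - v s, u⟫| ≤ ‖v t - v s‖ * ‖u‖ := abs_real_inner_le_norm _ _
    have h2 : ‖v t - v s‖ ≤ 200 * η * ‖Hop‖ / S.g r^2 * |t - s| := by
      rw [div_mul_eq_mul_div, le_div_iff₀ hgg]
      linarith [h1]
    calc (Real.sqrt n)⁻¹ * |⟪v t - v s, u⟫| ≤ (Real.sqrt n)⁻¹ * (‖v t - v s‖ * ‖u‖) :=
          mul_le_mul_of_nonneg_left hCS (by positivity)
    _ ≤ (Real.sqrt n)⁻¹ * ((200 * η * ‖Hop‖ / S.g r^2 * |t - s|) * ‖u‖) := by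
        apply mul_le_mul_of_nonneg_left _ (by positivity)
        exact mul_le_mul_of_nonneg_right h2 (norm_nonneg u)
    _ = (Real.sqrt n)⁻¹ * (200 * η * ‖Hop‖ / S.g r^2) * ‖u‖ * |t - s| := by ring
  · intro t ht
    have h1 := hvL t ht 0 hI0
    have h1' : S.g r^2 * ‖v t - v 0‖ ≤ 200 * η * ‖Hop‖ * |t| := by simpa using h1
    have he : (Real.sqrt n)⁻¹ * ⟪v t, u⟫ - (Real.sqrt n)⁻¹ * ⟪v 0, u⟫ =
        (Real.sqrt n)⁻¹ * ⟪v t - v 0, u⟫ := by rw [inner_sub_left]; ring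
    rw [he, abs_mul, abs_of_nonneg (inv_nonneg.2 (Real.sqrt_nonneg _))]
    have hCS : |⟪v t - v 0, u⟫| ≤ ‖v t - v 0‖ * ‖u‖ := abs_real_inner_le_norm _ _
    have h4 : (Real.sqrt n)⁻¹ * (n:ℝ) = Real.sqrt n := by
      field_simp
      rw [Real.sq_sqrt hn0.le]
    have h5 : η * Real.sqrt n = ‖Hop‖ := by
      rw [hη]
      exact div_mul_cancel₀ _ hsq0.ne'
    have hgn : (0:ℝ) < S.g r^2 * n := by positivity
    rw [le_div_iff₀ hgn]
    calc (Real.sqrt n)⁻¹ * |⟪v t - v 0, u⟫| * (S.g r^2 * n) ≤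
          (Real.sqrt n)⁻¹ * (‖v t - v 0‖ * ‖u‖) * (S.g r^2 * n) := by
            apply mul_le_mul_of_nonneg_right _ hgn.le
            exact mul_le_mul_of_nonneg_left hCS (by positivity)
    _ = (S.g r^2 * ‖v t - v 0‖) * ‖u‖ * ((Real.sqrt n)⁻¹ * n) := by ring
    _ = (S.g r^2 * ‖v t - v 0‖) * ‖u‖ * Real.sqrt n := by rw [h4]
    _ ≤ (200 * η * ‖Hop‖ * |t|) * ‖u‖ * Real.sqrt n := by
        apply mul_le_mul_of_nonneg_right _ (Real.sqrt_nonneg _)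
        exact mul_le_mul_of_nonneg_right h1' (norm_nonneg u)
    _ = 200 * (η * Real.sqrt n) * ‖Hop‖ * |t| * ‖u‖ := by ring
    _ = 200 * ‖Hop‖ * ‖Hop‖ * |t| * ‖u‖ := by rw [h5]
    _ ≤ 2000 * |t| * ‖Hop‖^2 * ‖u‖ := by
        nlinarith [mul_nonneg (mul_nonneg (mul_nonneg (norm_nonneg Hop) (norm_nonneg Hop))
          (abs_nonneg t)) (norm_nonneg u)]




end KLN
end
end
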